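/- arXiv:1603.00340 — 13 statements merged into one kernel-verified Lean document; each statement's English description precedes it below -/
import Mathlib

section
/- Pathwise (smooth-noise) Stochastic Decomposition Formula (Theorem 2.2): Suppose g : ℝ → ℝ is differentiable with g(t) > 0 for all t ≥ 0 and g'(t) = g(t)·(r − r·g(t)) + σ·g(t)·w'(t) for all t ≥ 0, and Ψ : ℝ → (Fin n → ℝ) is differentiable with Ψᵢ'(τ) = Ψᵢ(τ)·(r + Σⱼ a i j · Ψⱼ(τ)) for all τ ≥ 0 and every index i. Define Φ(t) := g(t) • Ψ(∫₀ᵗ g(s) ds). Then Φ(0) = g(0) • Ψ(0), and for every t ≥ 0 and every i, Φᵢ is differentiable at t with Φᵢ'(t) = Φᵢ(t)·(r + Σⱼ a i j · Φⱼ(t)) + σ·Φᵢ(t)·w'(t). That is, the solution of the noisy Lotka–Volterra system is the noisy logistic scalar factor g(t) times the deterministic Lotka–Volterra solution evaluated at the random time ∫₀ᵗ g(s) ds. -/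
/-!
By the product and chain rules, `Φᵢ' = g' Ψᵢ(G) + g² Ψᵢ'(G)` with `G(t) = ∫₀ᵗ g`. The logistic
equation turns the first term into `Φᵢ (r - r g + σ w')`, the Lotka–Volterra equation turns the
second into `Φᵢ (r g + Σⱼ aᵢⱼ Φⱼ)`, and the terms `∓ r g Φᵢ` cancel. Since `g > 0`, the random
time `G(t)` stays in `[0, ∞)`, where `Ψ` solves its equation.
-/

open intervalIntegral

theorem hasDerivAt_mul_comp_integral {g ψ : ℝ → ℝ} {g' ψ' a t : ℝ} (hgc : Continuous g)
    (hg : HasDerivAt g g' t) (hψ : HasDerivAt ψ ψ' (∫ s in a..t, g s)) :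
    HasDerivAt (fun u => g u * ψ (∫ s in a..u, g s))
      (g' * ψ (∫ s in a..t, g s) + g t * (ψ' * g t)) t :=
  hg.mul (hψ.comp t (hgc.integral_hasStrictDerivAt a t).hasDerivAt)

theorem Finset.sum_mul_mul_left {ι R : Type*} [CommSemiring R] (s : Finset ι) (a x : ι → R)
    (c : R) :
    ∑ j ∈ s, a j * (c * x j) = c * ∑ j ∈ s, a j * x j := by
  rw [Finset.mul_sum]
  simp only [mul_left_comm]

theorem stochastic_decomposition_formula_pathwise_general
    (n : ℕ) (r σ : ℝ) (a : Fin n → Fin n → ℝ)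
    (w : ℝ → ℝ)
    (g : ℝ → ℝ) (hg : Differentiable ℝ g)
    (hgpos : ∀ t : ℝ, 0 ≤ t → 0 < g t)
    (hg' : ∀ t : ℝ, 0 ≤ t →
      deriv g t = g t * (r - r * g t) + σ * g t * deriv w t)
    (Ψ : ℝ → Fin n → ℝ) (hΨ : ∀ i, Differentiable ℝ fun τ => Ψ τ i)
    (hΨ' : ∀ τ : ℝ, 0 ≤ τ → ∀ i,
      deriv (fun τ => Ψ τ i) τ = Ψ τ i * (r + ∑ j, a i j * Ψ τ j))
    (Φ : ℝ → Fin n → ℝ)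
    (hΦ : ∀ t : ℝ, Φ t = g t • Ψ (∫ s in (0:ℝ)..t, g s)) :
    Φ 0 = g 0 • Ψ 0 ∧
    ∀ t : ℝ, 0 ≤ t → ∀ i,
      HasDerivAt (fun t => Φ t i)
        (Φ t i * (r + ∑ j, a i j * Φ t j) + σ * Φ t i * deriv w t) t := by
  refine ⟨by simp [hΦ], fun t ht i => ?_⟩
  set G : ℝ → ℝ := fun t => ∫ s in (0:ℝ)..t, g s
  have hG_nonneg : 0 ≤ G t := integral_nonneg ht fun s hs => (hgpos s hs.1).le
  have hg_t := hg' t ht ▸ (hg t).hasDerivAt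
  have hΨ_Gt := hΨ' (G t) hG_nonneg i ▸ (hΨ i (G t)).hasDerivAt
  have hΦ_apply (u : ℝ) (j : Fin n) : Φ u j = g u * Ψ (G u) j := by simp [hΦ, G]
  simp only [hΦ_apply, Finset.sum_mul_mul_left]
  convert hasDerivAt_mul_comp_integral hg.continuous hg_t hΨ_Gt using 1
  ring

/-- **Pathwise Stochastic Decomposition Formula** (Theorem 2.2, smooth-noise form).
If `g` solves the noisy logistic equation `g' = g(r - r g) + σ g w'` on `[0,∞)` with `g > 0`,
and `Ψ` solves the deterministic Lotka–Volterra system `Ψᵢ' = Ψᵢ (r + Σⱼ aᵢⱼ Ψⱼ)` on `[0,∞)`,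
then `Φ(t) := g(t) • Ψ(∫₀ᵗ g)` satisfies `Φ(0) = g(0) • Ψ(0)` and solves the noisy
Lotka–Volterra system `Φᵢ' = Φᵢ (r + Σⱼ aᵢⱼ Φⱼ) + σ Φᵢ w'` on `[0,∞)`. -/
theorem stochastic_decomposition_formula_pathwise
    (n : ℕ) (r σ : ℝ) (hr : 0 < r) (a : Fin n → Fin n → ℝ)
    (w : ℝ → ℝ) (hw : Differentiable ℝ w)
    (g : ℝ → ℝ) (hg : Differentiable ℝ g)
    (hgpos : ∀ t : ℝ, 0 ≤ t → 0 < g t)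
    (hg' : ∀ t : ℝ, 0 ≤ t →
      deriv g t = g t * (r - r * g t) + σ * g t * deriv w t)
    (Ψ : ℝ → Fin n → ℝ) (hΨ : ∀ i, Differentiable ℝ fun τ => Ψ τ i)
    (hΨ' : ∀ τ : ℝ, 0 ≤ τ → ∀ i,
      deriv (fun τ => Ψ τ i) τ = Ψ τ i * (r + ∑ j, a i j * Ψ τ j))
    (Φ : ℝ → Fin n → ℝ)
    (hΦ : ∀ t : ℝ, Φ t = g t • Ψ (∫ s in (0:ℝ)..t, g s)) :
    Φ 0 = g 0 • Ψ 0 ∧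
    ∀ t : ℝ, 0 ≤ t → ∀ i,
      HasDerivAt (fun t => Φ t i)
        (Φ t i * (r + ∑ j, a i j * Φ t j) + σ * Φ t i * deriv w t) t :=
  stochastic_decomposition_formula_pathwise_general n r σ a w g hg hgpos hg' Ψ hΨ hΨ' Φ hΦ
end

section
/- Explicit solution of the pathwise logistic equation (formula (3.1)): Let w : ℝ → ℝ be differentiable with w(0) = 0 and let x > 0. Define g(t) := x·exp(rt + σ·w(t)) / (1 + r·x·∫₀ᵗ exp(rs + σ·w(s)) ds). Then g(0) = x, g(t) > 0 for all t ≥ 0, and for all t ≥ 0, g is differentiable at t with g'(t) = g(t)·(r − r·g(t)) + σ·g(t)·w'(t). -/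
open Real Filter Topology intervalIntegral

/-!
With `E t = exp (r t + σ w t)` and `D t = 1 + r x ∫₀ᵗ E`, the candidate is `g = x E / D`.
Since `E' = E (r + σ w')` and `D' = r x E = r g D`, the quotient rule gives
`g' = g (r + σ w') - r g²`, which is the logistic equation; `D ≥ 1` on `[0, ∞)` because
its integrand is positive.
-/

theorem hasDerivAt_exp_mul_add_mul {w : ℝ → ℝ} {t : ℝ} (r σ : ℝ) (hw : DifferentiableAt ℝ w t) :
    HasDerivAt (fun u => exp (r * u + σ * w u))
      (exp (r * t + σ * w t) * (r + σ * deriv w t)) t := by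
  have hexponent : HasDerivAt (fun u => r * u + σ * w u) (r + σ * deriv w t) t :=
    (((hasDerivAt_id t).const_mul r).add (hw.hasDerivAt.const_mul σ)).congr_deriv (by ring)
  simpa [mul_comm] using hexponent.exp

theorem HasDerivAt.mul_div_one_add_mul {E F : ℝ → ℝ} {a r x t : ℝ}
    (hE : HasDerivAt E (E t * a) t) (hF : HasDerivAt F (E t) t) (hD : 1 + r * x * F t ≠ 0) :
    HasDerivAt (fun u => x * E u / (1 + r * x * F u))
      (x * E t / (1 + r * x * F t) * (a - r * (x * E t / (1 + r * x * F t)))) t := by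
  refine ((hE.const_mul x).div ((hF.const_mul (r * x)).const_add 1) hD).congr_deriv ?_
  generalize 1 + r * x * F t = D at hD ⊢
  field_simp

theorem one_le_one_add_mul_integral_exp {c t : ℝ} (φ : ℝ → ℝ) (hc : 0 ≤ c) (ht : 0 ≤ t) :
    1 ≤ 1 + c * ∫ s in (0:ℝ)..t, exp (φ s) :=
  le_add_of_nonneg_right (mul_nonneg hc (integral_nonneg ht fun _ _ => (exp_pos _).le))

/-- **Explicit solution of the pathwise logistic equation** (formula (3.1)).
For a differentiable noise path `w` with `w 0 = 0` and `x > 0`, the function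
`g(t) = x e^{rt + σ w(t)} / (1 + r x ∫₀ᵗ e^{rs + σ w(s)} ds)` satisfies `g(0) = x`,
is positive on `[0,∞)`, and solves `g' = g (r - r g) + σ g w'` there. -/
theorem logistic_explicit_solution_pathwise
    (r σ x : ℝ) (hr : 0 < r) (hx : 0 < x)
    (w : ℝ → ℝ) (hw : Differentiable ℝ w) (hw0 : w 0 = 0)
    (g : ℝ → ℝ)
    (hg : ∀ t : ℝ, g t =
      x * Real.exp (r * t + σ * w t) /
        (1 + r * x * ∫ s in (0:ℝ)..t, Real.exp (r * s + σ * w s))) :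
    g 0 = x ∧ (∀ t : ℝ, 0 ≤ t → 0 < g t) ∧
    ∀ t : ℝ, 0 ≤ t →
      HasDerivAt g (g t * (r - r * g t) + σ * g t * deriv w t) t := by
  have hE_cont : Continuous fun s => exp (r * s + σ * w s) := by
    have := hw.continuous
    fun_prop
  have hD_pos : ∀ t, 0 ≤ t → 0 < 1 + r * x * ∫ s in (0:ℝ)..t, exp (r * s + σ * w s) :=
    fun t ht => one_pos.trans_le
      (one_le_one_add_mul_integral_exp (fun s => r * s + σ * w s) (by positivity) ht)
  rw [funext hg]
  refine ⟨by simp [hw0], fun t ht => div_pos (by positivity) (hD_pos t ht), fun t ht => ?_⟩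
  have hF : HasDerivAt (fun t => ∫ s in (0:ℝ)..t, exp (r * s + σ * w s))
      (exp (r * t + σ * w t)) t :=
    integral_hasDerivAt_right (hE_cont.intervalIntegrable 0 t)
      (hE_cont.stronglyMeasurableAtFilter _ _) hE_cont.continuousAt
  exact ((hasDerivAt_exp_mul_add_mul r σ (hw t)).mul_div_one_add_mul hF
    (hD_pos t ht).ne').congr_deriv (by ring)
end

section
/- The random equilibrium of the logistic equation is an entire solution (formula (3.2)): Let w : ℝ → ℝ be differentiable and assume that s ↦ exp(rs + σ·w(s)) is integrable on (−∞, 0]. Define u(t) := exp(rt + σ·w(t)) / (r·∫_{−∞}^{t} exp(rs + σ·w(s)) ds). Then u(t) > 0 for every t ∈ ℝ, and for every t ∈ ℝ, u is differentiable at t with u'(t) = u(t)·(r − r·u(t)) + σ·u(t)·w'(t); that is, u is a positive solution of the pathwise logistic equation defined for all real time. -/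
/-!
Write `g(s) = exp (r s + σ w s)` and `G(t) = ∫_{-∞}^t g`. Then `G' = g` by the fundamental theorem
of calculus (integrability on `(-∞, 0]` propagates to every `(-∞, t]` because `g` is continuous),
and `g' = (r + σ w') g`, so the quotient rule gives `u' = u (r + σ w' - r u)` for `u = g / (r G)`.
Positivity of `u` is that of the exponential and of its integral.
-/

open Real Filter Topology MeasureTheory

namespace MeasureTheory

variable {E : Type*} [NormedAddCommGroup E] {f : ℝ → E}

theorem LocallyIntegrable.integrableOn_Iic_of_integrableOn_Iic (hloc : LocallyIntegrable f)
    {a : ℝ} (ha : IntegrableOn f (Set.Iic a)) (b : ℝ) : IntegrableOn f (Set.Iic b) :=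
  integrableOn_Iic_iff_integrableAtFilter_atBot.2
    ⟨(integrableOn_Iic_iff_integrableAtFilter_atBot.1 ha).1, hloc.locallyIntegrableOn _⟩

theorem hasDerivAt_setIntegral_Iic [NormedSpace ℝ E] [CompleteSpace E]
    (hloc : LocallyIntegrable f) {a : ℝ} (ha : IntegrableOn f (Set.Iic a)) {t : ℝ}
    (ht : ContinuousAt f t) :
    HasDerivAt (fun x => ∫ s in Set.Iic x, f s) (f t) t := by
  have hIic := hloc.integrableOn_Iic_of_integrableOn_Iic ha
  have hsplit : ∀ x, (∫ s in Set.Iic t, f s) + ∫ s in t..x, f s = ∫ s in Set.Iic x, f s :=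
    fun x => by rw [← intervalIntegral.integral_Iic_sub_Iic (hIic t) (hIic x), add_sub_cancel]
  have hftc : HasDerivAt (fun x => ∫ s in t..x, f s) (f t) t :=
    intervalIntegral.integral_hasDerivAt_right IntervalIntegrable.refl
      ⟨Set.univ, univ_mem, hloc.aestronglyMeasurable.restrict⟩ ht
  simpa only [hsplit] using hftc.const_add (∫ s in Set.Iic t, f s)

end MeasureTheory

theorem hasDerivAt_div_const_mul_primitive {g G : ℝ → ℝ} {a c t : ℝ}
    (hg : HasDerivAt g (a * g t) t) (hG : HasDerivAt G (g t) t) (hc : c ≠ 0) (hG0 : G t ≠ 0) :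
    HasDerivAt (fun x => g x / (c * G x)) (g t / (c * G t) * (a - c * (g t / (c * G t)))) t := by
  refine (hg.fun_div (hG.const_mul c) (mul_ne_zero hc hG0)).congr_deriv ?_
  field_simp

/-- **The random equilibrium of the logistic equation is an entire solution**
(formula (3.2), pathwise form). If `s ↦ e^{rs + σ w(s)}` is integrable on `(-∞, 0]`,
then `u(t) = e^{rt + σ w(t)} / (r ∫_{-∞}^t e^{rs + σ w(s)} ds)` is positive and solves
the pathwise logistic equation `u' = u (r - r u) + σ u w'` for every real time `t`. -/
theorem logistic_random_equilibrium_entire_solution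
    (r σ : ℝ) (hr : 0 < r)
    (w : ℝ → ℝ) (hw : Differentiable ℝ w)
    (hint : IntegrableOn (fun s => Real.exp (r * s + σ * w s)) (Set.Iic 0))
    (u : ℝ → ℝ)
    (hu : ∀ t : ℝ, u t =
      Real.exp (r * t + σ * w t) /
        (r * ∫ s in Set.Iic t, Real.exp (r * s + σ * w s))) :
    ∀ t : ℝ, 0 < u t ∧
      HasDerivAt u (u t * (r - r * u t) + σ * u t * deriv w t) t := by
  set g : ℝ → ℝ := fun s => Real.exp (r * s + σ * w s)
  have hg_deriv (t : ℝ) : HasDerivAt g ((r + σ * deriv w t) * g t) t := by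
    have hexponent : HasDerivAt (fun s => r * s + σ * w s) (r + σ * deriv w t) t :=
      (hasDerivAt_const_mul r).fun_add ((hw t).hasDerivAt.const_mul σ)
    rw [mul_comm]
    exact hexponent.exp
  have hg_cont : Continuous g := continuous_iff_continuousAt.2 fun t => (hg_deriv t).continuousAt
  have hg_loc : LocallyIntegrable g := hg_cont.locallyIntegrable
  have hG_pos (t : ℝ) : 0 < ∫ s in Set.Iic t, g s := by
    have : NeZero (volume.restrict (Set.Iic t)) := ⟨by simp⟩
    exact integral_exp_pos (hg_loc.integrableOn_Iic_of_integrableOn_Iic hint t)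
  have hu_eq : u = fun t => g t / (r * ∫ s in Set.Iic t, g s) := funext hu
  intro t
  have hv := hasDerivAt_div_const_mul_primitive (hg_deriv t)
    (hasDerivAt_setIntegral_Iic hg_loc hint hg_cont.continuousAt)
    hr.ne' (hG_pos t).ne'
  rw [← hu_eq, ← hu t] at hv
  refine ⟨hu t ▸ div_pos (exp_pos _) (mul_pos hr (hG_pos t)), ?_⟩
  exact hv.congr_deriv (by ring)
end

section
/- Forward time-average of the logistic solution (Lemma 3.2, equation (3.6), pathwise form): Let w : [0,∞) → ℝ be continuous with w(0) = 0 and w(t)/t → 0 as t → ∞, and let x > 0. Define g(t) := x·exp(rt + σ·w(t)) / (1 + r·x·∫₀ᵗ exp(rs + σ·w(s)) ds). Then (1/t)·∫₀ᵗ g(s) ds → 1 as t → ∞. Equivalently, (1/(r·t))·log(1 + r·x·∫₀ᵗ exp(rs + σ·w(s)) ds) → 1 as t → ∞. -/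
open Real Filter Topology intervalIntegral

/-!
With `h(s) = r s + σ w(s)` and `F(t) = 1 + r x ∫₀ᵗ e^{h(s)} ds`, the solution is `g = F' / (r F)`,
so `∫₀ᵗ g = log F(t) / r` and both limits reduce to `log F(t) / t → r`. Since `h(s) = r s + o(s)`,
for any `b < r < b'` the integral `∫₀ᵗ e^h` is eventually at least `e^{b (t - 1)}` (the contribution
of `[t - 1, t]`) and at most `C + t e^{b' t}`.
-/

open Set

section Primitive

variable {f : ℝ → ℝ} {a t : ℝ}

lemma one_add_mul_integral_pos (ha : 0 ≤ a) (hf : 0 ≤ f) (ht : 0 ≤ t) :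
    0 < 1 + a * ∫ s in (0:ℝ)..t, f s := by
  have : 0 ≤ ∫ s in (0:ℝ)..t, f s := intervalIntegral.integral_nonneg ht fun s _ => hf s
  positivity

lemma ContinuousOn.intervalIntegrable_of_Ici {c b : ℝ} (hf : ContinuousOn f (Ici c))
    (hca : c ≤ a) (hab : a ≤ b) : IntervalIntegrable f MeasureTheory.volume a b :=
  (hf.mono fun _ hs => hca.trans (uIcc_of_le hab ▸ hs).1).intervalIntegrable

lemma integral_mul_div_one_add_mul_integral_eq_log (hf : ContinuousOn f (Ici 0)) (hf0 : 0 ≤ f)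
    (ha : 0 ≤ a) (ht : 0 ≤ t) :
    ∫ s in (0:ℝ)..t, a * f s / (1 + a * ∫ u in (0:ℝ)..s, f u) =
      log (1 + a * ∫ s in (0:ℝ)..t, f s) := by
  set F : ℝ → ℝ := fun s => 1 + a * ∫ u in (0:ℝ)..s, f u
  have hFne : ∀ s ∈ Icc (0:ℝ) t, F s ≠ 0 := fun s hs =>
    (one_add_mul_integral_pos ha hf0 hs.1).ne'
  have hfIcc : ContinuousOn f (Icc 0 t) := hf.mono Icc_subset_Ici_self
  have hFcont : ContinuousOn F (Icc 0 t) := by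
    have hprim := continuousOn_primitive_interval
      (uIcc_of_le ht ▸ hfIcc.integrableOn_Icc (μ := MeasureTheory.volume))
    exact continuousOn_const.add (continuousOn_const.mul (uIcc_of_le ht ▸ hprim))
  have hderiv : ∀ s ∈ Ioo 0 t, HasDerivAt (fun s => log (F s)) (a * f s / F s) s := by
    intro s hs
    have hfs : ContinuousAt f s := hf.continuousAt (Ici_mem_nhds hs.1)
    have hprim := integral_hasDerivAt_right (hf.intervalIntegrable_of_Ici le_rfl hs.1.le)
      ((hf.mono Ioi_subset_Ici_self).stronglyMeasurableAtFilter isOpen_Ioi s hs.1) hfs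
    exact ((hprim.const_mul a).const_add 1).log (hFne s (Ioo_subset_Icc_self hs))
  have hint : IntervalIntegrable (fun s => a * f s / F s) MeasureTheory.volume 0 t :=
    ((continuousOn_const.mul hfIcc).div hFcont hFne).intervalIntegrable_of_Icc ht
  change ∫ s in (0:ℝ)..t, a * f s / F s = log (F t)
  rw [integral_eq_sub_of_hasDerivAt_of_le ht (hFcont.log hFne) hderiv hint]
  simp [F]

end Primitive

section ExponentialGrowth

variable {h : ℝ → ℝ} {a b c t : ℝ}

lemma eventually_mul_le_of_tendsto_div (hlim : Tendsto (fun s => h s / s) atTop (𝓝 c))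
    (hbc : b < c) : ∀ᶠ s in atTop, b * s ≤ h s := by
  filter_upwards [hlim.eventually (lt_mem_nhds hbc), eventually_gt_atTop 0] with s hs hs0
  exact ((lt_div_iff₀ hs0).1 hs).le

lemma eventually_le_mul_of_tendsto_div (hlim : Tendsto (fun s => h s / s) atTop (𝓝 c))
    (hcb : c < b) : ∀ᶠ s in atTop, h s ≤ b * s := by
  filter_upwards [hlim.eventually (gt_mem_nhds hcb), eventually_gt_atTop 0] with s hs hs0
  exact ((div_lt_iff₀ hs0).1 hs).le

lemma tendsto_mul_add_div_atTop {f : ℝ → ℝ} (hf : Tendsto (fun t => f t / t) atTop (𝓝 0)) :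
    Tendsto (fun t => (b * t + f t) / t) atTop (𝓝 b) := by
  have := (tendsto_const_nhds (x := b)).add hf
  rw [add_zero] at this
  refine this.congr' ?_
  filter_upwards [eventually_ne_atTop 0] with t ht
  field_simp

lemma exp_mul_le_integral_exp (hh : ContinuousOn h (Ici 0)) (hb : 0 ≤ b) (ht : 1 ≤ t)
    (hbh : ∀ s ∈ Icc (t - 1) t, b * s ≤ h s) :
    exp (b * (t - 1)) ≤ ∫ s in (0:ℝ)..t, exp (h s) := by
  have hexp : ContinuousOn (fun s => exp (h s)) (Ici 0) := continuous_exp.comp_continuousOn hh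
  calc exp (b * (t - 1)) = ∫ _ in (t - 1)..t, exp (b * (t - 1)) := by simp
    _ ≤ ∫ s in (t - 1)..t, exp (h s) := by
      refine integral_mono_on (by linarith) intervalIntegrable_const
        (hexp.intervalIntegrable_of_Ici (by linarith) (by linarith)) fun s hs => ?_
      exact exp_le_exp.2 ((mul_le_mul_of_nonneg_left hs.1 hb).trans (hbh s hs))
    _ ≤ ∫ s in (0:ℝ)..t, exp (h s) :=
      integral_mono_interval (by linarith) (by linarith) le_rfl
        (Eventually.of_forall fun s => (exp_pos _).le)
        (hexp.intervalIntegrable_of_Ici le_rfl (by linarith))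

lemma integral_exp_le {T : ℝ} (hh : ContinuousOn h (Ici 0)) (hb : 0 ≤ b) (hT : 0 ≤ T)
    (hTt : T ≤ t) (hhb : ∀ s ∈ Icc T t, h s ≤ b * s) :
    ∫ s in (0:ℝ)..t, exp (h s) ≤ (∫ s in (0:ℝ)..T, exp (h s)) + t * exp (b * t) := by
  have hexp : ContinuousOn (fun s => exp (h s)) (Ici 0) := continuous_exp.comp_continuousOn hh
  rw [← integral_add_adjacent_intervals (hexp.intervalIntegrable_of_Ici le_rfl hT)
    (hexp.intervalIntegrable_of_Ici hT hTt)]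
  have htail : ∫ s in T..t, exp (h s) ≤ t * exp (b * t) :=
    calc ∫ s in T..t, exp (h s) ≤ ∫ _ in T..t, exp (b * t) := by
          refine integral_mono_on hTt (hexp.intervalIntegrable_of_Ici hT hTt)
            intervalIntegrable_const fun s hs => ?_
          exact exp_le_exp.2 ((hhb s hs).trans (mul_le_mul_of_nonneg_left hs.2 hb))
      _ = (t - T) * exp (b * t) := by simp
      _ ≤ t * exp (b * t) := by gcongr; linarith
  linarith

lemma eventually_mul_add_le_log_one_add_mul_integral_exp (hh : ContinuousOn h (Ici 0))
    (ha : 0 < a) (hb : 0 ≤ b) (hbh : ∀ᶠ s in atTop, b * s ≤ h s) :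
    ∀ᶠ t in atTop, b * t + (log a - b) ≤ log (1 + a * ∫ s in (0:ℝ)..t, exp (h s)) := by
  obtain ⟨T, hT⟩ := eventually_atTop.1 hbh
  filter_upwards [eventually_ge_atTop (T + 1), eventually_ge_atTop 1] with t hTt ht
  have hint := exp_mul_le_integral_exp hh hb ht fun s hs => hT s (by linarith [hs.1])
  calc b * t + (log a - b) = log (a * exp (b * (t - 1))) := by
        rw [log_mul ha.ne' (exp_ne_zero _), log_exp]; ring
    _ ≤ log (1 + a * ∫ s in (0:ℝ)..t, exp (h s)) :=
        log_le_log (by positivity) (by nlinarith [mul_le_mul_of_nonneg_left hint ha.le])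

lemma exists_eventually_log_one_add_mul_integral_exp_le (hh : ContinuousOn h (Ici 0))
    (ha : 0 < a) (hb : 0 ≤ b) (hhb : ∀ᶠ s in atTop, h s ≤ b * s) :
    ∃ D, ∀ᶠ t in atTop, log (1 + a * ∫ s in (0:ℝ)..t, exp (h s)) ≤ b * t + (log t + D) := by
  obtain ⟨T, hT⟩ := (hhb.and (eventually_ge_atTop 0)).exists_forall_of_atTop
  have hT0 : 0 ≤ T := (hT T le_rfl).2
  set C := ∫ s in (0:ℝ)..T, exp (h s)
  have hC : 0 ≤ C := intervalIntegral.integral_nonneg hT0 fun s _ => (exp_pos _).le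
  refine ⟨log (1 + a * C + a), ?_⟩
  filter_upwards [eventually_ge_atTop T, eventually_ge_atTop 1] with t hTt ht
  have hint := integral_exp_le hh hb hT0 hTt fun s hs => (hT s hs.1).1
  have hone : 1 ≤ t * exp (b * t) :=
    one_le_mul_of_one_le_of_one_le ht (one_le_exp (by positivity))
  calc log (1 + a * ∫ s in (0:ℝ)..t, exp (h s))
      ≤ log ((1 + a * C + a) * (t * exp (b * t))) := by
        refine log_le_log (one_add_mul_integral_pos ha.le (fun s => (exp_pos _).le) (by linarith))
          ?_
        nlinarith [mul_le_mul_of_nonneg_left hint ha.le, mul_nonneg ha.le hC]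
    _ = b * t + (log t + log (1 + a * C + a)) := by
        rw [log_mul (by positivity) (by positivity), log_mul (by positivity) (exp_ne_zero _),
          log_exp]
        ring

theorem tendsto_log_one_add_mul_integral_exp_div (hh : ContinuousOn h (Ici 0)) (ha : 0 < a)
    (hc : 0 < c) (hlim : Tendsto (fun s => h s / s) atTop (𝓝 c)) :
    Tendsto (fun t => log (1 + a * ∫ s in (0:ℝ)..t, exp (h s)) / t) atTop (𝓝 c) := by
  rw [tendsto_order]
  refine ⟨fun d hd => ?_, fun d hd => ?_⟩
  · obtain ⟨b, hdb, hbc⟩ := exists_between (max_lt hd hc)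
    have hlower : Tendsto (fun t => (b * t + (log a - b)) / t) atTop (𝓝 b) :=
      tendsto_mul_add_div_atTop (tendsto_const_nhds.div_atTop tendsto_id)
    filter_upwards [hlower.eventually (lt_mem_nhds ((le_max_left _ _).trans_lt hdb)),
      eventually_mul_add_le_log_one_add_mul_integral_exp hh ha
        ((le_max_right _ _).trans hdb.le) (eventually_mul_le_of_tendsto_div hlim hbc),
      eventually_gt_atTop 0] with t hlt hle ht
    exact hlt.trans_le (div_le_div_of_nonneg_right hle ht.le)
  · obtain ⟨b, hcb, hbd⟩ := exists_between hd
    obtain ⟨D, hD⟩ := exists_eventually_log_one_add_mul_integral_exp_le hh ha (hc.trans hcb).le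
      (eventually_le_mul_of_tendsto_div hlim hcb)
    have hupper : Tendsto (fun t => (b * t + (log t + D)) / t) atTop (𝓝 b) := by
      refine tendsto_mul_add_div_atTop ?_
      simpa only [add_div, add_zero, id] using
        isLittleO_log_id_atTop.tendsto_div_nhds_zero.add
          (tendsto_const_nhds.div_atTop tendsto_id)
    filter_upwards [hupper.eventually (gt_mem_nhds hbd), hD, eventually_gt_atTop 0]
      with t hlt hle ht
    exact (div_le_div_of_nonneg_right hle ht.le).trans_lt hlt

end ExponentialGrowth

theorem logistic_forward_time_average_general
    (r σ x : ℝ) (hr : 0 < r) (hx : 0 < x)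
    (w : ℝ → ℝ) (hw : ContinuousOn w (Set.Ici 0))
    (hwslow : Tendsto (fun t => w t / t) atTop (𝓝 0))
    (g : ℝ → ℝ)
    (hg : ∀ t : ℝ, 0 ≤ t → g t =
      x * Real.exp (r * t + σ * w t) /
        (1 + r * x * ∫ s in (0:ℝ)..t, Real.exp (r * s + σ * w s))) :
    Tendsto (fun t : ℝ => (1 / t) * ∫ s in (0:ℝ)..t, g s) atTop (𝓝 1) ∧
    Tendsto (fun t : ℝ => (1 / (r * t)) *
        Real.log (1 + r * x * ∫ s in (0:ℝ)..t, Real.exp (r * s + σ * w s)))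
      atTop (𝓝 1) := by
  have hh : ContinuousOn (fun s => r * s + σ * w s) (Ici 0) :=
    (continuousOn_const.mul continuousOn_id).add (continuousOn_const.mul hw)
  have hlim : Tendsto (fun s => (r * s + σ * w s) / s) atTop (𝓝 r) :=
    tendsto_mul_add_div_atTop <| by
      simpa only [mul_div_assoc, mul_zero] using hwslow.const_mul σ
  have hlog := (tendsto_log_one_add_mul_integral_exp_div hh (mul_pos hr hx) hr hlim).div_const r
  rw [div_self hr.ne'] at hlog
  have hg_integral : ∀ t, 0 ≤ t → ∫ s in (0:ℝ)..t, g s =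
      log (1 + r * x * ∫ s in (0:ℝ)..t, exp (r * s + σ * w s)) / r := by
    intro t ht
    rw [← integral_mul_div_one_add_mul_integral_eq_log (f := fun s => exp (r * s + σ * w s))
      (continuous_exp.comp_continuousOn hh)
      (fun s => (exp_pos _).le) (mul_pos hr hx).le ht, ← intervalIntegral.integral_div]
    refine integral_congr fun s hs => ?_
    rw [hg s (uIcc_of_le ht ▸ hs).1]
    field_simp
  refine ⟨hlog.congr' ?_, hlog.congr' ?_⟩ <;>
    filter_upwards [eventually_gt_atTop 0] with t ht
  · rw [hg_integral t ht.le]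
    field_simp
  · field_simp

/-- **Forward time-average of the logistic solution** (Lemma 3.2, equation (3.6),
pathwise form). If the noise path `w` is continuous on `[0,∞)` with `w 0 = 0` and
`w(t)/t → 0`, then the explicit logistic solution `g` with initial value `x > 0`
satisfies `(1/t) ∫₀ᵗ g(s) ds → 1` as `t → ∞`; equivalently
`(1/(rt)) log(1 + r x ∫₀ᵗ e^{rs + σ w(s)} ds) → 1`. -/
theorem logistic_forward_time_average
    (r σ x : ℝ) (hr : 0 < r) (hx : 0 < x)
    (w : ℝ → ℝ) (hw : ContinuousOn w (Set.Ici 0)) (hw0 : w 0 = 0)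
    (hwslow : Tendsto (fun t => w t / t) atTop (𝓝 0))
    (g : ℝ → ℝ)
    (hg : ∀ t : ℝ, 0 ≤ t → g t =
      x * Real.exp (r * t + σ * w t) /
        (1 + r * x * ∫ s in (0:ℝ)..t, Real.exp (r * s + σ * w s))) :
    Tendsto (fun t : ℝ => (1 / t) * ∫ s in (0:ℝ)..t, g s) atTop (𝓝 1) ∧
    Tendsto (fun t : ℝ => (1 / (r * t)) *
        Real.log (1 + r * x * ∫ s in (0:ℝ)..t, Real.exp (r * s + σ * w s)))
      atTop (𝓝 1) :=
  logistic_forward_time_average_general r σ x hr hx w hw hwslow g hg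
end

section
/- Pull-back convergence of the logistic equation to its random equilibrium (Lemma 3.1, pathwise form): Let w : ℝ → ℝ be continuous with w(0) = 0 and w(−t)/t → 0 as t → +∞, and let x > 0. Then the integral I := ∫_{−∞}^{0} exp(rs + σ·w(s)) ds is finite, and the pull-back value G(t) := x·exp(rt − σ·w(−t)) / (1 + r·x·exp(rt − σ·w(−t))·∫_{−t}^{0} exp(rτ + σ·w(τ)) dτ) satisfies G(t) → 1/(r·I) as t → +∞. -/
open Real Filter Topology MeasureTheory intervalIntegral Set

/-! Sublinearity of `w` gives `r t - σ w(-t) ≥ r t / 2` for large `t`. Hence the integrand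
`e^{rs + σ w(s)}` is dominated by `e^{rs/2}` near `-∞`, so `I` is finite, and
`u(t) = x e^{rt - σ w(-t)}` tends to `+∞`. Writing `G(t) = 1 / (u(t)⁻¹ + r ∫_{-t}^0 …)`,
the denominator tends to `r I > 0`. -/

lemma eventually_half_mul_le_mul_sub {g : ℝ → ℝ} {r : ℝ} (hr : 0 < r)
    (hg : Tendsto (fun t => g t / t) atTop (𝓝 0)) :
    ∀ᶠ t in atTop, r / 2 * t ≤ r * t - g t := by
  filter_upwards [hg.eventually (gt_mem_nhds (half_pos hr)), eventually_gt_atTop 0]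
    with t hlt hpos
  have := (div_lt_iff₀ hpos).mp hlt
  linarith

lemma integrableOn_Iic_exp_of_eventually_le_mul {φ : ℝ → ℝ} (hφ : Continuous φ) {c : ℝ}
    (hc : 0 < c) (hle : ∀ᶠ s in atBot, φ s ≤ c * s) (a : ℝ) :
    IntegrableOn (fun s => exp (φ s)) (Iic a) := by
  refine ((continuous_exp.comp hφ).locallyIntegrable.locallyIntegrableOn _)
    |>.integrableOn_of_isBigO_atBot (g := fun s => exp (c * s)) ?_
      ⟨Iic 0, Iic_mem_atBot 0, integrableOn_exp_mul_Iic hc 0⟩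
  refine Asymptotics.IsBigO.of_bound 1 ?_
  filter_upwards [hle] with s hs
  simpa [abs_of_pos (exp_pos _)] using hs

lemma tendsto_div_one_add_mul {α : Type*} {l : Filter α} {u J : α → ℝ} {r I : ℝ}
    (hu : Tendsto u l atTop) (hJ : Tendsto J l (𝓝 I)) (hrI : r * I ≠ 0) :
    Tendsto (fun t => u t / (1 + r * u t * J t)) l (𝓝 (1 / (r * I))) := by
  have hden : Tendsto (fun t => (u t)⁻¹ + r * J t) l (𝓝 (r * I)) := by
    simpa using hu.inv_tendsto_atTop.add (hJ.const_mul r)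
  refine (tendsto_const_nhds.div hden hrI).congr' ?_
  filter_upwards [hu.eventually_gt_atTop 0] with t ht
  simp only [Pi.div_apply]
  field_simp

theorem logistic_pullback_convergence_random_equilibrium_general
    (r σ x : ℝ) (hr : 0 < r) (hx : 0 < x)
    (w : ℝ → ℝ) (hw : Continuous w)
    (hwslow : Tendsto (fun t => w (-t) / t) atTop (𝓝 0)) :
    IntegrableOn (fun s => Real.exp (r * s + σ * w s)) (Set.Iic 0) ∧
    Tendsto (fun t : ℝ =>
        x * Real.exp (r * t - σ * w (-t)) /
          (1 + r * x * Real.exp (r * t - σ * w (-t)) *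
            ∫ τ in (-t)..(0:ℝ), Real.exp (r * τ + σ * w τ)))
      atTop
      (𝓝 (1 / (r * ∫ s in Set.Iic (0:ℝ), Real.exp (r * s + σ * w s)))) := by
  have hslow : Tendsto (fun t => σ * w (-t) / t) atTop (𝓝 0) := by
    simpa [mul_div_assoc] using hwslow.const_mul σ
  have hlin := eventually_half_mul_le_mul_sub hr hslow
  have hint : IntegrableOn (fun s => exp (r * s + σ * w s)) (Iic 0) := by
    refine integrableOn_Iic_exp_of_eventually_le_mul (by fun_prop) (half_pos hr) ?_ 0
    filter_upwards [tendsto_neg_atBot_atTop.eventually hlin] with s hs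
    rw [neg_neg] at hs
    linarith
  refine ⟨hint, ?_⟩
  have hE : Tendsto (fun t => r * t - σ * w (-t)) atTop atTop :=
    tendsto_atTop_mono' _ hlin (tendsto_id.const_mul_atTop (half_pos hr))
  have hu := (tendsto_exp_atTop.comp hE).const_mul_atTop hx
  have hJ := intervalIntegral_tendsto_integral_Iic 0 hint tendsto_neg_atTop_atBot
  have : NeZero (volume.restrict (Iic (0:ℝ))) := ⟨by simp⟩
  have hI : 0 < ∫ s in Iic (0:ℝ), exp (r * s + σ * w s) := integral_exp_pos hint
  simpa only [Function.comp_apply, mul_assoc] using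
    tendsto_div_one_add_mul hu hJ (mul_pos hr hI).ne'

/-- **Pull-back convergence of the logistic equation to its random equilibrium**
(Lemma 3.1, pathwise form). If `w` is continuous with `w 0 = 0` and `w(-t)/t → 0`,
then `I = ∫_{-∞}^0 e^{rs + σ w(s)} ds` is finite and the pull-back value
`G(t) = x e^{rt - σ w(-t)} / (1 + r x e^{rt - σ w(-t)} ∫_{-t}^0 e^{rτ + σ w(τ)} dτ)`
converges to `1/(r I)` as `t → ∞`. -/
theorem logistic_pullback_convergence_random_equilibrium
    (r σ x : ℝ) (hr : 0 < r) (hx : 0 < x)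
    (w : ℝ → ℝ) (hw : Continuous w) (hw0 : w 0 = 0)
    (hwslow : Tendsto (fun t => w (-t) / t) atTop (𝓝 0)) :
    IntegrableOn (fun s => Real.exp (r * s + σ * w s)) (Set.Iic 0) ∧
    Tendsto (fun t : ℝ =>
        x * Real.exp (r * t - σ * w (-t)) /
          (1 + r * x * Real.exp (r * t - σ * w (-t)) *
            ∫ τ in (-t)..(0:ℝ), Real.exp (r * τ + σ * w τ)))
      atTop
      (𝓝 (1 / (r * ∫ s in Set.Iic (0:ℝ), Real.exp (r * s + σ * w s)))) :=
  logistic_pullback_convergence_random_equilibrium_general r σ x hr hx w hw hwslow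
end

section
/- Pull-back time-average of the logistic solution (Lemma 3.2, equation (3.5), pathwise form): Let w : ℝ → ℝ be continuous with w(0) = 0 and w(−t)/t → 0 as t → +∞, and let x > 0. Then lim_{t→∞} (1/(r·t))·log(1 + r·x·exp(rt − σ·w(−t))·∫_{−t}^{0} exp(rτ + σ·w(τ)) dτ) = 1. -/
open Real Filter Topology intervalIntegral

/-!
Write `A t = r t - σ w(-t)` and `I t = ∫_{-t}^0 e^{rτ + σ w(τ)} dτ`. Since `e^{-A t}` is the
integrand at `τ = -t`, we have `log (1 + r x e^{A t} I t) = A t + log (e^{-A t} + r x I t)`.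
The first term is `r t + o(t)`. As `rτ + σ w(τ) → -∞` when `τ → -∞`, the integrand is bounded on
`(-∞, 0]`, so the argument of the second logarithm lies between a positive constant and a
multiple of `t`; hence the second term is `O(log t) = o(t)`.
-/

theorem exists_forall_le_of_tendsto_atBot {f : ℝ → ℝ} (hf : Continuous f)
    (hlim : Tendsto f atTop atBot) (a : ℝ) : ∃ M, ∀ s ≥ a, f s ≤ M := by
  obtain ⟨b, hb⟩ := eventually_atTop.1 (hlim.eventually_le_atBot (f a))
  obtain ⟨M, hM⟩ := (isCompact_Icc (a := a) (b := b)).bddAbove_image hf.continuousOn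
  refine ⟨max M (f a), fun s hs => ?_⟩
  rcases le_total s b with hsb | hbs
  · exact le_max_of_le_left (hM ⟨s, ⟨hs, hsb⟩, rfl⟩)
  · exact le_max_of_le_right (hb s hbs)

theorem tendsto_log_div_self_of_le {u : ℝ → ℝ} {a b : ℝ} (ha : 0 < a) (hb : 0 < b)
    (hlow : ∀ᶠ t in atTop, a ≤ u t) (hup : ∀ᶠ t in atTop, u t ≤ b * t) :
    Tendsto (fun t => log (u t) / t) atTop (𝓝 0) := by
  have hlog : Tendsto (fun t => log t / t) atTop (𝓝 0) := by
    simpa using Real.isLittleO_log_id_atTop.tendsto_div_nhds_zero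
  have hconst (c : ℝ) : Tendsto (fun t : ℝ => c / t) atTop (𝓝 0) :=
    tendsto_const_nhds.div_atTop tendsto_id
  refine tendsto_of_tendsto_of_tendsto_of_le_of_le' (hconst (log a))
    (by simpa using (hconst (log b)).add hlog) ?_ ?_
  all_goals filter_upwards [hlow, hup, eventually_gt_atTop 0] with t hlow hup ht
  · gcongr
  · rw [← add_div, ← log_mul hb.ne' ht.ne']
    gcongr
    linarith

theorem log_one_add_exp_mul {a y : ℝ} (hy : 0 ≤ y) :
    log (1 + exp a * y) = a + log (exp (-a) + y) := by
  have h : 1 + exp a * y = exp a * (exp (-a) + y) := by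
    rw [mul_add, ← exp_add, add_neg_cancel, exp_zero]
  rw [h, log_mul (exp_pos a).ne' (by positivity), log_exp]

theorem tendsto_pullback_exponent_div {w : ℝ → ℝ}
    (hwslow : Tendsto (fun t => w (-t) / t) atTop (𝓝 0)) (r σ : ℝ) :
    Tendsto (fun t => (r * -t + σ * w (-t)) / t) atTop (𝓝 (-r)) := by
  have h := (hwslow.const_mul σ).const_add (-r)
  rw [mul_zero, add_zero] at h
  refine h.congr' ?_
  filter_upwards [eventually_ne_atTop 0] with t ht
  field_simp

theorem tendsto_pullback_exponent_atBot {w : ℝ → ℝ}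
    (hwslow : Tendsto (fun t => w (-t) / t) atTop (𝓝 0)) {r : ℝ} (hr : 0 < r) (σ : ℝ) :
    Tendsto (fun t => r * -t + σ * w (-t)) atTop atBot := by
  refine (tendsto_id.atTop_mul_neg (neg_neg_of_pos hr)
    (tendsto_pullback_exponent_div hwslow r σ)).congr' ?_
  filter_upwards [eventually_ne_atTop 0] with t ht
  exact mul_div_cancel₀ _ ht

theorem integral_neg_le_integral_neg {g : ℝ → ℝ} (hg : Continuous g) (hpos : ∀ τ, 0 ≤ g τ)
    {s t : ℝ} (hs : 0 ≤ s) (hst : s ≤ t) :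
    ∫ τ in (-s)..0, g τ ≤ ∫ τ in (-t)..0, g τ :=
  integral_mono_interval (by linarith) (by linarith) le_rfl
    (Eventually.of_forall hpos) (hg.intervalIntegrable _ _)

theorem integral_neg_le_mul {g : ℝ → ℝ} (hg : Continuous g) {B : ℝ} (hB : ∀ τ ≤ 0, g τ ≤ B)
    {t : ℝ} (ht : 0 ≤ t) : ∫ τ in (-t)..0, g τ ≤ B * t :=
  calc ∫ τ in (-t)..0, g τ ≤ ∫ _ in (-t)..0, B :=
        integral_mono_on (by linarith) (hg.intervalIntegrable _ _) intervalIntegrable_const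
          fun τ hτ => hB τ hτ.2
    _ = B * t := by simp [mul_comm]

theorem tendsto_log_add_integral_div {g : ℝ → ℝ} (hg : Continuous g) (hpos : ∀ τ, 0 < g τ)
    {B : ℝ} (hB : ∀ τ ≤ 0, g τ ≤ B) {k : ℝ} (hk : 0 < k) :
    Tendsto (fun t => log (g (-t) + k * ∫ τ in (-t)..0, g τ) / t) atTop (𝓝 0) := by
  have hI1 : 0 < ∫ τ in (-1)..0, g τ :=
    intervalIntegral_pos_of_pos (hg.intervalIntegrable _ _) hpos (by norm_num)
  have hB0 : 0 < B := (hpos 0).trans_le (hB 0 le_rfl)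
  refine tendsto_log_div_self_of_le (a := k * ∫ τ in (-1)..0, g τ) (b := (1 + k) * B)
    (by positivity) (by positivity) ?_ ?_
  all_goals filter_upwards [eventually_ge_atTop 1] with t ht
  · have := mul_le_mul_of_nonneg_left
      (integral_neg_le_integral_neg hg (fun τ => (hpos τ).le) zero_le_one ht) hk.le
    linarith [hpos (-t)]
  · have hgt : g (-t) ≤ B * t :=
      (hB (-t) (by linarith)).trans (le_mul_of_one_le_right hB0.le ht)
    have := mul_le_mul_of_nonneg_left (integral_neg_le_mul hg hB (t := t) (by linarith)) hk.le
    linarith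

theorem logistic_pullback_time_average_general
    (r σ x : ℝ) (hr : 0 < r) (hx : 0 < x)
    (w : ℝ → ℝ) (hw : Continuous w)
    (hwslow : Tendsto (fun t => w (-t) / t) atTop (𝓝 0)) :
    Tendsto (fun t : ℝ => (1 / (r * t)) *
        Real.log (1 + r * x * Real.exp (r * t - σ * w (-t)) *
          ∫ τ in (-t)..(0:ℝ), Real.exp (r * τ + σ * w τ)))
      atTop (𝓝 1) := by
  obtain ⟨M, hM⟩ := exists_forall_le_of_tendsto_atBot (by fun_prop)
    (tendsto_pullback_exponent_atBot hwslow hr σ) 0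
  have hlog := tendsto_log_add_integral_div (g := fun τ => exp (r * τ + σ * w τ))
    (by fun_prop) (fun _ => exp_pos _) (B := exp M)
    (fun τ hτ => by simpa using exp_le_exp.2 (hM (-τ) (by linarith))) (mul_pos hr hx)
  have hlim := ((tendsto_pullback_exponent_div hwslow r σ).neg.add hlog).div_const r
  rw [neg_neg, add_zero, div_self hr.ne'] at hlim
  refine hlim.congr' ?_
  filter_upwards [eventually_gt_atTop 0] with t ht
  set I := ∫ τ in (-t)..(0:ℝ), exp (r * τ + σ * w τ)
  have hI : 0 ≤ r * x * I :=
    mul_nonneg (by positivity) (integral_nonneg (by linarith) fun _ _ => (exp_pos _).le)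
  rw [show r * x * exp (r * t - σ * w (-t)) * I = exp (r * t - σ * w (-t)) * (r * x * I) by ring,
    log_one_add_exp_mul hI, show -(r * t - σ * w (-t)) = r * -t + σ * w (-t) by ring]
  field_simp
  ring

/-- **Pull-back time-average of the logistic solution** (Lemma 3.2, equation (3.5),
pathwise form). If `w` is continuous with `w 0 = 0` and `w(-t)/t → 0`, then
`(1/(rt)) log(1 + r x e^{rt - σ w(-t)} ∫_{-t}^0 e^{rτ + σ w(τ)} dτ) → 1` as `t → ∞`,
i.e. `(1/t) ∫₀ᵗ g(s, θ_{-t} w, x) ds → 1`. -/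
theorem logistic_pullback_time_average
    (r σ x : ℝ) (hr : 0 < r) (hx : 0 < x)
    (w : ℝ → ℝ) (hw : Continuous w) (hw0 : w 0 = 0)
    (hwslow : Tendsto (fun t => w (-t) / t) atTop (𝓝 0)) :
    Tendsto (fun t : ℝ => (1 / (r * t)) *
        Real.log (1 + r * x * Real.exp (r * t - σ * w (-t)) *
          ∫ τ in (-t)..(0:ℝ), Real.exp (r * τ + σ * w τ)))
      atTop (𝓝 1) :=
  logistic_pullback_time_average_general r σ x hr hx w hw hwslow
end

section
/- Cluster-set identity underlying the pull-back omega-limit theorem (core of Theorem 3.2): Let c : [0,∞) → (Fin n → ℝ) be bounded and continuous, and let L(c) denote its set of cluster points at infinity, i.e. z ∈ L(c) iff there exist tₖ → ∞ with c(tₖ) → z. Let a : [0,∞) → ℝ satisfy a(t) → u as t → ∞ with u > 0, and let τ : [0,∞) → [0,∞) be continuous with τ(t) → ∞ as t → ∞. Then the set of cluster points at infinity of the curve t ↦ a(t) • c(τ(t)) equals u • L(c) := {u • z : z ∈ L(c)}. -/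
open Filter Topology

/-- The set of cluster points at infinity of a curve `γ : [0,∞) → E`:
`z` is a cluster point iff there is a sequence `tₖ → ∞` (in `[0,∞)`) with `γ(tₖ) → z`. -/
def clusterSetAtTop {E : Type*} [TopologicalSpace E] (γ : ℝ → E) : Set E :=
  {z | ∃ tk : ℕ → ℝ, (∀ k, 0 ≤ tk k) ∧ Tendsto tk atTop atTop ∧
    Tendsto (fun k => γ (tk k)) atTop (𝓝 z)}

/-- Surjectivity of `τ` onto `[τ 0, ∞)` from continuity and divergence. -/
lemma exists_preimage_of_tendsto_atTop (τ : ℝ → ℝ)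
    (hτ_cont : ContinuousOn τ (Set.Ici 0)) (hτ_top : Tendsto τ atTop atTop)
    (s : ℝ) (hs : τ 0 ≤ s) : ∃ t, 0 ≤ t ∧ τ t = s := by
  obtain ⟨T, hT1, hT2⟩ := ((hτ_top.eventually_ge_atTop s).and (eventually_ge_atTop 0)).exists
  have h1 : Set.Icc (τ 0) (τ T) ⊆ τ '' Set.Icc 0 T :=
    intermediate_value_Icc hT2 (hτ_cont.mono (fun x hx => hx.1))
  obtain ⟨t, ht, hts⟩ := h1 ⟨hs, hT1⟩
  exact ⟨t, ht.1, hts⟩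

/-- **Cluster-set identity underlying the pull-back omega-limit theorem**
(core of Theorem 3.2). If `c : [0,∞) → ℝⁿ` is bounded and continuous, `a(t) → u > 0`,
and `τ : [0,∞) → [0,∞)` is continuous with `τ(t) → ∞`, then the cluster set at infinity
of `t ↦ a(t) • c(τ(t))` is `u • L(c)`, where `L(c)` is the cluster set of `c`. -/
theorem clusterSet_smul_time_change
    (n : ℕ) (c : ℝ → Fin n → ℝ)
    (hc_cont : ContinuousOn c (Set.Ici 0))
    (hc_bdd : ∃ M : ℝ, ∀ t : ℝ, 0 ≤ t → ‖c t‖ ≤ M)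
    (u : ℝ) (hu : 0 < u)
    (a : ℝ → ℝ) (ha : Tendsto a atTop (𝓝 u))
    (τ : ℝ → ℝ) (hτ_cont : ContinuousOn τ (Set.Ici 0))
    (hτ_nonneg : ∀ t : ℝ, 0 ≤ t → 0 ≤ τ t)
    (hτ_top : Tendsto τ atTop atTop) :
    clusterSetAtTop (fun t => a t • c (τ t)) =
      (fun z : Fin n → ℝ => u • z) '' clusterSetAtTop c := by
  ext z
  constructor
  · rintro ⟨tk, htk0, htkTop, htkLim⟩
    -- c (τ (tk k)) → u⁻¹ • z
    have haTk : Tendsto (fun k => a (tk k)) atTop (𝓝 u) := ha.comp htkTop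
    have hne : ∀ᶠ k in atTop, a (tk k) ≠ 0 :=
      (haTk.eventually_ne (ne_of_gt hu)).mono (fun k hk => hk)
    have hinv : Tendsto (fun k => (a (tk k))⁻¹) atTop (𝓝 u⁻¹) :=
      haTk.inv₀ (ne_of_gt hu)
    have hcLim : Tendsto (fun k => c (τ (tk k))) atTop (𝓝 (u⁻¹ • z)) := by
      have h1 : Tendsto (fun k => (a (tk k))⁻¹ • (a (tk k) • c (τ (tk k)))) atTop
          (𝓝 (u⁻¹ • z)) := hinv.smul htkLim
      refine h1.congr' ?_
      filter_upwards [hne] with k hk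
      simp [smul_smul, inv_mul_cancel₀ hk]
    refine ⟨u⁻¹ • z, ⟨fun k => τ (tk k), fun k => hτ_nonneg _ (htk0 k),
      hτ_top.comp htkTop, hcLim⟩, ?_⟩
    simp [smul_smul, mul_inv_cancel₀ (ne_of_gt hu)]
  · rintro ⟨w, ⟨sk, hsk0, hskTop, hskLim⟩, rfl⟩
    -- choose tk with τ (tk k) = sk k (eventually)
    set tk : ℕ → ℝ := fun k =>
      if h : τ 0 ≤ sk k then
        (exists_preimage_of_tendsto_atTop τ hτ_cont hτ_top (sk k) h).choose
      else 0 with htkdef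
    have htk0 : ∀ k, 0 ≤ tk k := by
      intro k
      by_cases h : τ 0 ≤ sk k
      · simp only [htkdef, dif_pos h]
        exact (exists_preimage_of_tendsto_atTop τ hτ_cont hτ_top (sk k) h).choose_spec.1
      · simp [htkdef, dif_neg h]
    have htkτ : ∀ᶠ k in atTop, τ (tk k) = sk k := by
      filter_upwards [hskTop.eventually_ge_atTop (τ 0)] with k h
      simp only [htkdef, dif_pos h]
      exact (exists_preimage_of_tendsto_atTop τ hτ_cont hτ_top (sk k) h).choose_spec.2
    have htkTop : Tendsto tk atTop atTop := by
      rw [tendsto_atTop]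
      intro B
      obtain ⟨M, hM⟩ := ((isCompact_Icc (a := (0:ℝ)) (b := max 0 B)).image_of_continuousOn
        (hτ_cont.mono (fun x hx => hx.1))).bddAbove
      filter_upwards [hskTop.eventually_gt_atTop M, htkτ] with k hk hτk
      by_contra hcon
      push_neg at hcon
      have htkB : tk k ∈ Set.Icc (0:ℝ) (max 0 B) := ⟨htk0 k, le_trans hcon.le (le_max_right _ _)⟩
      have hle : τ (tk k) ≤ M := hM (Set.mem_image_of_mem τ htkB)
      rw [hτk] at hle
      exact absurd hle (not_le.mpr hk)
    refine ⟨tk, htk0, htkTop, ?_⟩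
    have hcτ : Tendsto (fun k => c (τ (tk k))) atTop (𝓝 w) := by
      refine hskLim.congr' ?_
      filter_upwards [htkτ] with k hk
      rw [hk]
    exact (ha.comp htkTop).smul hcτ
end

section
/- Distribution function of the stationary measure supported on a ray (formulas (4.4)/(4.8)): Let n ∈ ℕ, r > 0, σ ≠ 0, α := 2r/σ², and let P ∈ (Fin n → ℝ) be nonzero with Pᵢ ≥ 0 for all i. Let μ^σ_P be the pushforward of the Gamma distribution with shape α and rate α under the map s ↦ s•P. Then for every z ∈ (Fin n → ℝ) with zᵢ ≥ 0 for all i, μ^σ_P({y : ∀ i, yᵢ ≤ zᵢ}) = ∫₀^{m} p^σ(s) ds, where m := min{zᵢ/Pᵢ : Pᵢ ≠ 0} and p^σ(s) = α^α/Γ(α)·s^{α−1}·exp(−α·s) is the Gamma(α, α) density. -/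
open Real Filter Topology MeasureTheory ProbabilityTheory intervalIntegral

/-!
The ray map `s ↦ s • P` pulls the lower orthant below `z` back to the half-line `Iic m`, where
`m = min {zᵢ / Pᵢ : Pᵢ ≠ 0}` is the largest scale keeping `s • P` below `z` (coordinates with
`Pᵢ = 0` impose no constraint because `zᵢ ≥ 0`). Hence the pushforward measure of the orthant is the
Gamma distribution function at `m ≥ 0`, and the Gamma density vanishes on the negative half-line.
-/

/-- The largest `s` with `s • P ≤ z`, for `P ≥ 0`, `P ≠ 0` and `z ≥ 0`. -/
noncomputable def rayScaleBound {ι : Type*} (P z : ι → ℝ) : ℝ :=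
  sInf {x : ℝ | ∃ i, P i ≠ 0 ∧ x = z i / P i}

section RayScaleBound

variable {ι : Type*} {P z : ι → ℝ}

lemma rayScaleBound_ratios_nonempty (hP : P ≠ 0) :
    {x : ℝ | ∃ i, P i ≠ 0 ∧ x = z i / P i}.Nonempty := by
  obtain ⟨i, hi⟩ := Function.ne_iff.mp hP
  exact ⟨z i / P i, i, hi, rfl⟩

lemma rayScaleBound_nonneg (hP : P ≠ 0) (hPnn : ∀ i, 0 ≤ P i) (hz : ∀ i, 0 ≤ z i) :
    0 ≤ rayScaleBound P z :=
  le_csInf (rayScaleBound_ratios_nonempty hP) fun _ ⟨i, _, hx⟩ ↦ hx ▸ div_nonneg (hz i) (hPnn i)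

lemma rayScaleBound_le (hPnn : ∀ i, 0 ≤ P i) (hz : ∀ i, 0 ≤ z i) {i : ι} (hi : P i ≠ 0) :
    rayScaleBound P z ≤ z i / P i :=
  csInf_le ⟨0, fun _ ⟨j, _, hx⟩ ↦ hx ▸ div_nonneg (hz j) (hPnn j)⟩ ⟨i, hi, rfl⟩

lemma smul_le_iff_le_rayScaleBound (hP : P ≠ 0) (hPnn : ∀ i, 0 ≤ P i) (hz : ∀ i, 0 ≤ z i)
    (s : ℝ) : (∀ i, s * P i ≤ z i) ↔ s ≤ rayScaleBound P z := by
  have hPpos : ∀ i, P i ≠ 0 → 0 < P i := fun i hi ↦ (hPnn i).lt_of_ne' hi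
  constructor
  · intro h
    refine le_csInf (rayScaleBound_ratios_nonempty hP) ?_
    rintro _ ⟨i, hi, rfl⟩
    exact (le_div_iff₀ (hPpos i hi)).mpr (h i)
  · intro hs i
    rcases eq_or_ne (P i) 0 with h0 | h0
    · simpa [h0] using hz i
    · exact (le_div_iff₀ (hPpos i h0)).mp (hs.trans (rayScaleBound_le hPnn hz h0))

lemma preimage_smul_lowerOrthant (hP : P ≠ 0) (hPnn : ∀ i, 0 ≤ P i) (hz : ∀ i, 0 ≤ z i) :
    (fun s : ℝ ↦ s • P) ⁻¹' {y | ∀ i, y i ≤ z i} = Set.Iic (rayScaleBound P z) := by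
  ext s
  exact smul_le_iff_le_rayScaleBound hP hPnn hz s

end RayScaleBound

lemma integral_Iic_gammaPDFReal {a r x : ℝ} (hx : 0 ≤ x) :
    ∫ s in Set.Iic x, gammaPDFReal a r s
      = ∫ s in (0 : ℝ)..x, r ^ a / Gamma a * s ^ (a - 1) * exp (-(r * s)) := by
  have hvanish : ∀ s ∈ Set.Iic x \ Set.Icc 0 x, gammaPDFReal a r s = 0 := fun s hs ↦
    if_neg fun h0 ↦ hs.2 ⟨h0, hs.1⟩
  rw [setIntegral_eq_of_subset_of_forall_sdiff_eq_zero measurableSet_Iic Set.Icc_subset_Iic_self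
    hvanish, integral_Icc_eq_integral_Ioc, ← integral_of_le hx]
  exact integral_congr fun s hs ↦ if_pos (by rw [Set.uIcc_of_le hx] at hs; exact hs.1)

lemma gammaMeasure_Iic {a r x : ℝ} (ha : 0 < a) (hr : 0 < r) (hx : 0 ≤ x) :
    gammaMeasure a r (Set.Iic x)
      = ENNReal.ofReal (∫ s in (0 : ℝ)..x, r ^ a / Gamma a * s ^ (a - 1) * exp (-(r * s))) := by
  have := isProbabilityMeasure_gammaMeasure ha hr
  rw [← ofReal_cdf, cdf_gammaMeasure_eq_integral ha hr, integral_Iic_gammaPDFReal hx]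

/-- **Distribution function of the stationary measure supported on a ray**
(formulas (4.4)/(4.8)). Let `μ^σ_P` be the pushforward of the Gamma(α, α)
distribution (`α = 2r/σ²`) under `s ↦ s • P`, where `P ≠ 0` has nonnegative
coordinates. Then for every nonnegative `z`,
`μ^σ_P {y | ∀ i, yᵢ ≤ zᵢ} = ∫₀^m p^σ(s) ds` with
`m = min {zᵢ/Pᵢ : Pᵢ ≠ 0}` and `p^σ(s) = α^α/Γ(α) s^{α-1} e^{-α s}`. -/
theorem stationary_measure_ray_distribution_function
    (n : ℕ) (r σ : ℝ) (hr : 0 < r) (hσ : σ ≠ 0)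
    (P : Fin n → ℝ) (hP : P ≠ 0) (hPnn : ∀ i, 0 ≤ P i)
    (z : Fin n → ℝ) (hz : ∀ i, 0 ≤ z i) :
    Measure.map (fun s : ℝ => s • P) (gammaMeasure (2 * r / σ ^ 2) (2 * r / σ ^ 2))
        {y : Fin n → ℝ | ∀ i, y i ≤ z i}
      = ENNReal.ofReal
          (∫ s in (0:ℝ)..(sInf {x : ℝ | ∃ i, P i ≠ 0 ∧ x = z i / P i}),
            (2 * r / σ ^ 2) ^ (2 * r / σ ^ 2) / Real.Gamma (2 * r / σ ^ 2) *
              s ^ (2 * r / σ ^ 2 - 1) * Real.exp (-(2 * r / σ ^ 2 * s))) := by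
  have hα : 0 < 2 * r / σ ^ 2 := by positivity
  have horthant : MeasurableSet {y : Fin n → ℝ | ∀ i, y i ≤ z i} := measurableSet_Iic (a := z)
  rw [Measure.map_apply (measurable_smul_const P) horthant,
    preimage_smul_lowerOrthant hP hPnn hz,
    gammaMeasure_Iic hα hα (rayScaleBound_nonneg hP hPnn hz), rayScaleBound]
end

section
/- Weak convergence of the stationary measures to the Dirac measure as the noise vanishes (Theorem 4.2(i)): Let n ∈ ℕ, r > 0, and let P ∈ (Fin n → ℝ) be nonzero with Pᵢ ≥ 0 for all i. For σ ≠ 0 let p^σ denote the density of the Gamma distribution with shape α := 2r/σ² and rate α. Then for every bounded continuous function f : (Fin n → ℝ) → ℝ, ∫₀^∞ f(s•P)·p^σ(s) ds → f(P) as σ → 0. Equivalently, the pushforward μ^σ_P of the Gamma(α, α) distribution under s ↦ s•P converges weakly to the Dirac measure δ_P as σ → 0. -/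
/-!
The integral is `∫ f (s • P) dγ_α` for the Gamma distribution `γ_α` with shape and rate
`α = 2r/σ²`. Since `x · p_b(x) = (b/r) · p_{b+1}(x)` for the Gamma densities `p_b` of rate `r`,
`∫ (x - 1)² dγ_α = α⁻¹`, so by Chebyshev `γ_α` concentrates at `1` as `α → ∞`,
i.e. as `σ → 0`. Integrating a bounded function continuous at `1` against probability measures
concentrating at `1` gives values tending to its value at `1`, here `f P`.
-/

open Real Filter Topology MeasureTheory ProbabilityTheory Set

section Concentration

variable {X : Type*} [MeasurableSpace X] {μ : Measure X} {g : X → ℝ} {x : X} {C ε : ℝ}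

lemma abs_integral_sub_le_add_measureReal_compl [IsProbabilityMeasure μ] (hgm : Measurable g)
    (hC : ∀ y, |g y| ≤ C) {u : Set X} (hu : MeasurableSet u) (hε : 0 ≤ ε)
    (hgu : ∀ y ∈ u, |g y - g x| ≤ ε) :
    |∫ y, g y ∂μ - g x| ≤ ε + 2 * C * μ.real uᶜ := by
  have hgi : Integrable g μ := .of_bound hgm.aestronglyMeasurable C (.of_forall fun y ↦ hC y)
  have hpt : ∀ y, |g y - g x| ≤ ε + uᶜ.indicator (fun _ ↦ 2 * C) y := fun y ↦ by
    by_cases hy : y ∈ u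
    · simpa [hy] using hgu y hy
    · simp only [Set.indicator_of_mem (Set.mem_compl hy)]
      linarith [abs_sub (g y) (g x), hC y, hC x]
  calc |∫ y, g y ∂μ - g x| = |∫ y, (g y - g x) ∂μ| := by
        rw [integral_sub hgi (integrable_const _), integral_const, probReal_univ, one_smul]
    _ ≤ ∫ y, |g y - g x| ∂μ := abs_integral_le_integral_abs
    _ ≤ ∫ y, (ε + uᶜ.indicator (fun _ ↦ 2 * C) y) ∂μ :=
        integral_mono (hgi.sub (integrable_const _)).abs
          ((integrable_const _).add ((integrable_const _).indicator hu.compl)) hpt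
    _ = ε + 2 * C * μ.real uᶜ := by
        rw [integral_add (integrable_const _) ((integrable_const _).indicator hu.compl),
          integral_const, integral_indicator_const _ hu.compl]
        simp [mul_comm]

lemma tendsto_integral_of_tendsto_measureReal_compl [TopologicalSpace X] {ι : Type*}
    {L : Filter ι} {μ : ι → Measure X} (hμ : ∀ᶠ i in L, IsProbabilityMeasure (μ i))
    (hconc : ∀ u ∈ 𝓝 x, Tendsto (fun i ↦ (μ i).real uᶜ) L (𝓝 0))
    (hg : ContinuousAt g x) (hgm : Measurable g) (hC : ∀ y, |g y| ≤ C) :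
    Tendsto (fun i ↦ ∫ y, g y ∂μ i) L (𝓝 (g x)) := by
  refine Metric.tendsto_nhds.2 fun ε hε ↦ ?_
  set u := g ⁻¹' Metric.ball (g x) (ε / 2)
  have hu : MeasurableSet u := hgm measurableSet_ball
  have hgu : ∀ y ∈ u, |g y - g x| ≤ ε / 2 := fun y hy ↦ by
    simpa [u, Real.dist_eq] using le_of_lt hy
  have htail : ∀ᶠ i in L, 2 * C * (μ i).real uᶜ < ε / 2 := by
    refine Tendsto.eventually_lt_const (half_pos hε) ?_
    simpa using (hconc u (hg (Metric.ball_mem_nhds _ (half_pos hε)))).const_mul (2 * C)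
  filter_upwards [hμ, htail] with i hi hi'
  rw [Real.dist_eq]
  linarith [abs_integral_sub_le_add_measureReal_compl hgm hC hu (half_pos hε).le hgu (μ := μ i)]

end Concentration

namespace ProbabilityTheory

variable {a r : ℝ}

lemma integral_gammaMeasure_eq_integral_smul {E : Type*} [NormedAddCommGroup E]
    [NormedSpace ℝ E] (ha : 0 < a) (hr : 0 < r) (f : ℝ → E) :
    ∫ x, f x ∂gammaMeasure a r = ∫ x, gammaPDFReal a r x • f x := by
  rw [gammaMeasure, integral_withDensity_eq_integral_toReal_smul (f := gammaPDF a r)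
    (measurable_gammaPDFReal a r).ennreal_ofReal (ae_of_all _ fun _ ↦ ENNReal.ofReal_lt_top)]
  simp only [gammaPDF, ENNReal.toReal_ofReal (gammaPDFReal_nonneg ha hr _)]

lemma integral_gammaMeasure_eq_setIntegral_Ioi (ha : 0 < a) (hr : 0 < r) (f : ℝ → ℝ) :
    ∫ x, f x ∂gammaMeasure a r =
      ∫ x in Ioi 0, f x * (r ^ a / Gamma a * x ^ (a - 1) * exp (-(r * x))) := by
  rw [integral_gammaMeasure_eq_integral_smul ha hr, ← integral_Ici_eq_integral_Ioi,
    ← setIntegral_eq_integral_of_forall_compl_eq_zero fun x hx ↦ by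
      simp [gammaPDFReal, show ¬ 0 ≤ x from hx]]
  exact setIntegral_congr_fun measurableSet_Ici fun x hx ↦ by
    simp [gammaPDFReal, show 0 ≤ x from hx, mul_comm]

lemma integral_gammaPDFReal (ha : 0 < a) (hr : 0 < r) : ∫ x, gammaPDFReal a r x = 1 := by
  have := isProbabilityMeasure_gammaMeasure ha hr
  simpa using (integral_gammaMeasure_eq_integral_smul ha hr fun _ ↦ (1 : ℝ)).symm

lemma integrable_gammaPDFReal (ha : 0 < a) (hr : 0 < r) : Integrable (gammaPDFReal a r) :=
  .of_integral_ne_zero (by simp [integral_gammaPDFReal ha hr])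

lemma mul_gammaPDFReal (ha : 0 < a) (hr : 0 < r) (x : ℝ) :
    x * gammaPDFReal a r x = a / r * gammaPDFReal (a + 1) r x := by
  rcases lt_or_ge x 0 with hx | hx
  · simp [gammaPDFReal, hx.not_ge]
  simp only [gammaPDFReal, if_pos hx, Real.Gamma_add_one ha.ne', add_sub_cancel_right,
    Real.rpow_add_one hr.ne']
  rcases hx.eq_or_lt with rfl | hx
  · simp [Real.zero_rpow ha.ne']
  rw [Real.rpow_sub_one hx.ne']
  have := (Real.Gamma_pos_of_pos ha).ne'
  field_simp

lemma sub_one_sq_mul_gammaPDFReal (ha : 0 < a) (x : ℝ) :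
    (x - 1) ^ 2 * gammaPDFReal a a x =
      (a + 1) / a * gammaPDFReal (a + 2) a x - 2 * gammaPDFReal (a + 1) a x
        + gammaPDFReal a a x := by
  have h1 := mul_gammaPDFReal ha ha x
  have h2 := mul_gammaPDFReal (a := a + 1) (by linarith) ha x
  rw [div_self ha.ne', one_mul] at h1
  rw [add_assoc, one_add_one_eq_two] at h2
  linear_combination (x - 2) * h1 + h2

lemma integral_sub_one_sq_gammaMeasure (ha : 0 < a) :
    ∫ x, (x - 1) ^ 2 ∂gammaMeasure a a = a⁻¹ := by
  have hint : ∀ b, 0 < b → Integrable (gammaPDFReal b a) := fun _ hb ↦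
    integrable_gammaPDFReal hb ha
  rw [integral_gammaMeasure_eq_integral_smul ha ha]
  simp only [smul_eq_mul, mul_comm (gammaPDFReal a a _), sub_one_sq_mul_gammaPDFReal ha]
  have h1 := (hint (a + 1) (by linarith)).const_mul 2
  have h2 := (hint (a + 2) (by linarith)).const_mul ((a + 1) / a)
  rw [integral_add (h2.sub' h1) (hint a ha), integral_sub h2 h1, integral_const_mul,
    integral_const_mul, integral_gammaPDFReal (by linarith) ha,
    integral_gammaPDFReal (by linarith) ha, integral_gammaPDFReal ha ha]
  field_simp
  ring

lemma measureReal_gammaMeasure_abs_sub_one_ge_le (ha : 0 < a) {δ : ℝ} (hδ : 0 < δ) :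
    (gammaMeasure a a).real {x | δ ≤ |x - 1|} ≤ a⁻¹ / δ ^ 2 := by
  have hvar := integral_sub_one_sq_gammaMeasure ha
  have hchebyshev := mul_meas_ge_le_integral_of_nonneg (μ := gammaMeasure a a)
    (ae_of_all _ fun x ↦ sq_nonneg (x - 1)) (.of_integral_ne_zero (by simp [hvar, ha.ne']))
    (δ ^ 2)
  have hset : {x : ℝ | δ ^ 2 ≤ (x - 1) ^ 2} = {x | δ ≤ |x - 1|} := by
    ext x; simp [sq_le_sq, abs_of_pos hδ]
  rw [hset, hvar] at hchebyshev
  rw [le_div_iff₀ (by positivity)]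
  linarith

lemma tendsto_measureReal_gammaMeasure_compl {u : Set ℝ} (hu : u ∈ 𝓝 1) :
    Tendsto (fun a ↦ (gammaMeasure a a).real uᶜ) atTop (𝓝 0) := by
  obtain ⟨δ, hδ, hball⟩ := Metric.mem_nhds_iff.1 hu
  have hsub : uᶜ ⊆ {x | δ ≤ |x - 1|} := fun x hx ↦
    not_lt.1 fun h ↦ hx (hball (by rwa [Metric.mem_ball, Real.dist_eq]))
  have hbound : Tendsto (fun a : ℝ ↦ a⁻¹ / δ ^ 2) atTop (𝓝 0) := by
    simpa using tendsto_inv_atTop_zero.div_const (δ ^ 2)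
  refine tendsto_of_tendsto_of_tendsto_of_le_of_le' tendsto_const_nhds hbound
    (.of_forall fun _ ↦ measureReal_nonneg) ?_
  filter_upwards [eventually_gt_atTop 0] with a ha
  have := isProbabilityMeasure_gammaMeasure ha ha
  exact (measureReal_mono hsub).trans (measureReal_gammaMeasure_abs_sub_one_ge_le ha hδ)

end ProbabilityTheory

lemma tendsto_div_sq_nhdsNE_zero {c : ℝ} (hc : 0 < c) :
    Tendsto (fun σ : ℝ ↦ c / σ ^ 2) (𝓝[≠] 0) atTop := by
  have hsq : Tendsto (fun σ : ℝ ↦ σ ^ 2) (𝓝[≠] 0) (𝓝[>] 0) := by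
    refine tendsto_nhdsWithin_iff.2 ⟨?_, eventually_nhdsWithin_of_forall fun σ hσ ↦
      pow_two_pos_of_ne_zero hσ⟩
    simpa using ((continuous_pow 2).tendsto (0 : ℝ)).mono_left nhdsWithin_le_nhds
  simpa [div_eq_mul_inv] using (tendsto_inv_nhdsGT_zero.comp hsq).const_mul_atTop hc

theorem stationary_measure_weak_convergence_to_dirac_general
    (n : ℕ) (r : ℝ) (hr : 0 < r)
    (P : Fin n → ℝ)
    (f : (Fin n → ℝ) → ℝ) (hf_cont : Continuous f)
    (hf_bdd : ∃ M : ℝ, ∀ x, |f x| ≤ M) :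
    Tendsto (fun σ : ℝ =>
        ∫ s in Set.Ioi (0:ℝ),
          f (s • P) *
            ((2 * r / σ ^ 2) ^ (2 * r / σ ^ 2) / Real.Gamma (2 * r / σ ^ 2) *
              s ^ (2 * r / σ ^ 2 - 1) * Real.exp (-(2 * r / σ ^ 2 * s))))
      (𝓝[≠] 0) (𝓝 (f P)) := by
  obtain ⟨M, hM⟩ := hf_bdd
  have hg : Continuous fun s : ℝ ↦ f (s • P) := by fun_prop
  have hα := tendsto_div_sq_nhdsNE_zero (mul_pos two_pos hr)
  have hγ : Tendsto (fun a ↦ ∫ s, f (s • P) ∂gammaMeasure a a) atTop (𝓝 (f P)) := by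
    simpa using tendsto_integral_of_tendsto_measureReal_compl
      ((eventually_gt_atTop 0).mono fun a ha ↦ isProbabilityMeasure_gammaMeasure ha ha)
      (fun _ ↦ tendsto_measureReal_gammaMeasure_compl) hg.continuousAt hg.measurable
      (fun s ↦ hM (s • P))
  refine (hγ.comp hα).congr' ?_
  filter_upwards [self_mem_nhdsWithin] with σ hσ
  have hpos : 0 < 2 * r / σ ^ 2 := div_pos (mul_pos two_pos hr) (pow_two_pos_of_ne_zero hσ)
  exact integral_gammaMeasure_eq_setIntegral_Ioi hpos hpos _

/-- **Weak convergence of the stationary measures to the Dirac measure as the noise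
vanishes** (Theorem 4.2(i)). With `p^σ` the Gamma(α, α) density, `α = 2r/σ²`, for
every bounded continuous `f` one has `∫₀^∞ f(s • P) p^σ(s) ds → f(P)` as `σ → 0`
(through nonzero values); i.e. `μ^σ_P → δ_P` weakly. -/
theorem stationary_measure_weak_convergence_to_dirac
    (n : ℕ) (r : ℝ) (hr : 0 < r)
    (P : Fin n → ℝ) (hP : P ≠ 0) (hPnn : ∀ i, 0 ≤ P i)
    (f : (Fin n → ℝ) → ℝ) (hf_cont : Continuous f)
    (hf_bdd : ∃ M : ℝ, ∀ x, |f x| ≤ M) :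
    Tendsto (fun σ : ℝ =>
        ∫ s in Set.Ioi (0:ℝ),
          f (s • P) *
            ((2 * r / σ ^ 2) ^ (2 * r / σ ^ 2) / Real.Gamma (2 * r / σ ^ 2) *
              s ^ (2 * r / σ ^ 2 - 1) * Real.exp (-(2 * r / σ ^ 2 * s))))
      (𝓝[≠] 0) (𝓝 (f P)) :=
  stationary_measure_weak_convergence_to_dirac_general n r hr P f hf_cont hf_bdd
end

section
/- Uniform second-moment bound for the logistic solution (equation (4.14)): Let r > 0, σ ∈ ℝ, and let B be a standard Brownian motion. Define g(t,ω) := exp(rt + σB_t(ω)) / (1 + r∫₀ᵗ exp(rs + σB_s(ω)) ds). Then for every t ≥ 0, 𝔼[g(t,·)²] ≤ (1 + σ²/r)². -/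
/-!
Let `ν = (δ₀ + r λ)|_{[0,t]}`. Since `B₀ = 0`, the denominator of `g t` is `∫ e^{rs + σB_s} dν(s)`,
so `1 / g t = ∫ e^{Y_s} dν(s)` with `Y_s = -r(t-s) - σ(B_t - B_s)`. Hölder's inequality with
exponents `3` and `3/2`, applied to `e^{-(r+σ²)(t-s)} = e^{(X_s + 2Y_s)/3}` with
`X_s = -(r+3σ²)(t-s) + 2σ(B_t - B_s)`, gives pathwise `g_t² D³ ≤ ∫ e^{X_s} dν(s)`, where
`D = ∫ e^{-(r+σ²)(t-s)} dν(s)` is deterministic. The Gaussian moment generating function gives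
`𝔼 e^{X_s} = e^{-(r+σ²)(t-s)}`, so by Fubini `𝔼[g_t²] ≤ D / D³ = 1 / D²`, and `D ≥ r / (r+σ²)`.
-/

open Real Filter Topology MeasureTheory ProbabilityTheory intervalIntegral Set

lemma three_mul_mul_sq_le_pow_three_add {p q : ℝ} (hp : 0 ≤ p) (hq : 0 ≤ q) :
    3 * p * q ^ 2 ≤ p ^ 3 + 2 * q ^ 3 := by
  nlinarith [mul_nonneg (sq_nonneg (p - q)) (by positivity : 0 ≤ p + 2 * q)]

lemma three_mul_sq_mul_exp_le (X Y : ℝ) {a : ℝ} (ha : 0 ≤ a) :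
    3 * a ^ 2 * exp ((X + 2 * Y) / 3) ≤ exp X + 2 * a ^ 3 * exp Y := by
  have hcube (Z : ℝ) : exp Z = exp (Z / 3) ^ 3 := by rw [← exp_nat_mul]; ring_nf
  have hmean : exp ((X + 2 * Y) / 3) = exp (X / 3) * exp (Y / 3) ^ 2 := by
    rw [← exp_nat_mul, ← exp_add]; ring_nf
  calc 3 * a ^ 2 * exp ((X + 2 * Y) / 3) = 3 * exp (X / 3) * (a * exp (Y / 3)) ^ 2 := by
        rw [hmean]; ring
    _ ≤ exp (X / 3) ^ 3 + 2 * (a * exp (Y / 3)) ^ 3 :=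
        three_mul_mul_sq_le_pow_three_add (exp_pos _).le (by positivity)
    _ = exp X + 2 * a ^ 3 * exp Y := by rw [hcube X, hcube Y]; ring

theorem integral_exp_mean_pow_three_le {α : Type*} [MeasurableSpace α] {μ : Measure α}
    {X Y : α → ℝ} (hX : Integrable (fun x => exp (X x)) μ)
    (hY : Integrable (fun x => exp (Y x)) μ) :
    (∫ x, exp ((X x + 2 * Y x) / 3) ∂μ) ^ 3 ≤
      (∫ x, exp (X x) ∂μ) * (∫ x, exp (Y x) ∂μ) ^ 2 := by
  rcases eq_zero_or_neZero μ with rfl | _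
  · simp
  set D := ∫ x, exp ((X x + 2 * Y x) / 3) ∂μ
  set N := ∫ x, exp (X x) ∂μ
  set I := ∫ x, exp (Y x) ∂μ
  have hI : 0 < I := integral_exp_pos hY
  have hD : 0 ≤ D := integral_nonneg fun x => (exp_pos _).le
  -- pointwise AM-GM, integrated, with the optimal weight `a = D / I`
  have key : 3 * (D / I) ^ 2 * D ≤ N + 2 * (D / I) ^ 3 * I := by
    rw [← MeasureTheory.integral_const_mul, ← MeasureTheory.integral_const_mul,
      ← integral_add hX (hY.const_mul _)]
    exact integral_mono_of_nonneg (ae_of_all _ fun x => by positivity)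
      (hX.add (hY.const_mul _)) (ae_of_all _ fun x => three_mul_sq_mul_exp_le _ _ (by positivity))
  have : D ^ 3 / I ^ 2 ≤ N := by
    have e1 : 3 * (D / I) ^ 2 * D = 3 * (D ^ 3 / I ^ 2) := by ring
    have e2 : 2 * (D / I) ^ 3 * I = 2 * (D ^ 3 / I ^ 2) := by field_simp
    linarith
  rwa [div_le_iff₀ (by positivity)] at this

instance IsFiniteMeasureOnCompacts.add {α : Type*} [MeasurableSpace α] [TopologicalSpace α]
    (μ ν : Measure α) [IsFiniteMeasureOnCompacts μ] [IsFiniteMeasureOnCompacts ν] :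
    IsFiniteMeasureOnCompacts (μ + ν) :=
  ⟨fun _ hK => ENNReal.add_lt_top.mpr ⟨hK.measure_lt_top, hK.measure_lt_top⟩⟩

noncomputable def logisticWeight (r : ℝ) : Measure ℝ :=
  Measure.dirac 0 + r.toNNReal • volume

instance (r : ℝ) : IsFiniteMeasureOnCompacts (logisticWeight r) := by
  rw [logisticWeight]; infer_instance

theorem setIntegral_Icc_logisticWeight {r t : ℝ} (hr : 0 ≤ r) (ht : 0 ≤ t) {f : ℝ → ℝ}
    (hf : Continuous f) :
    ∫ s in Icc 0 t, f s ∂logisticWeight r = f 0 + r * ∫ s in 0..t, f s := by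
  rw [logisticWeight, Measure.restrict_add, integral_add_measure hf.integrableOn_Icc
    hf.integrableOn_Icc, setIntegral_dirac, if_pos ⟨le_rfl, ht⟩, Measure.restrict_smul,
    integral_smul_nnreal_measure, integral_Icc_eq_integral_Ioc, ← integral_of_le ht,
    NNReal.smul_def, Real.coe_toNNReal _ hr, smul_eq_mul]

theorem setIntegral_Icc_logisticWeight_exp {r t c : ℝ} (hr : 0 ≤ r) (ht : 0 ≤ t) (hc : c ≠ 0) :
    ∫ s in Icc 0 t, exp (-c * (t - s)) ∂logisticWeight r = r / c + (1 - r / c) * exp (-c * t) := by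
  rw [setIntegral_Icc_logisticWeight hr ht (by fun_prop)]
  have hderiv (s : ℝ) (_ : s ∈ uIcc 0 t) :
      HasDerivAt (fun s => exp (-c * (t - s)) / c) (exp (-c * (t - s))) s := by
    refine ((((hasDerivAt_id s).const_sub t).const_mul (-c)).exp.div_const c).congr_deriv ?_
    field_simp
    rfl
  rw [integral_eq_sub_of_hasDerivAt hderiv ((by fun_prop : Continuous _).intervalIntegrable _ _)]
  simp only [sub_zero, sub_self, mul_zero, exp_zero]
  field_simp
  ring

theorem logistic_sq_mul_pow_three_le {r t σ : ℝ} (hr : 0 ≤ r) (ht : 0 ≤ t) {b : ℝ → ℝ}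
    (hb : Continuous b) (hb0 : b 0 = 0) :
    (exp (r * t + σ * b t) / (1 + r * ∫ s in 0..t, exp (r * s + σ * b s))) ^ 2 *
        (∫ s in Icc 0 t, exp (-(r + σ ^ 2) * (t - s)) ∂logisticWeight r) ^ 3 ≤
      ∫ s in Icc 0 t, exp (-(r + 3 * σ ^ 2) * (t - s) + 2 * σ * (b t - b s)) ∂logisticWeight r := by
  set G := exp (r * t + σ * b t) / (1 + r * ∫ s in 0..t, exp (r * s + σ * b s))
  set N := ∫ s in Icc 0 t, exp (-(r + 3 * σ ^ 2) * (t - s) + 2 * σ * (b t - b s)) ∂logisticWeight r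
  set I := ∫ s in Icc 0 t, exp (-r * (t - s) - σ * (b t - b s)) ∂logisticWeight r
  have hGI : G * I = 1 := by
    have hI : I = exp (-(r * t + σ * b t)) * (1 + r * ∫ s in 0..t, exp (r * s + σ * b s)) := by
      have h := setIntegral_Icc_logisticWeight hr ht (f := fun s => exp (r * s + σ * b s))
        (by fun_prop)
      simp only [mul_zero, hb0, zero_add, exp_zero] at h
      rw [← h, ← MeasureTheory.integral_const_mul]
      refine integral_congr_ae (ae_of_all _ fun s => ?_)
      simp only [← exp_add]; ring_nf
    have hden : 0 < 1 + r * ∫ s in 0..t, exp (r * s + σ * b s) := by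
      have := intervalIntegral.integral_nonneg (μ := volume) ht
        fun s _ => (exp_pos (r * s + σ * b s)).le
      positivity
    rw [hI, exp_neg]
    simp only [G]
    field_simp
  have hHolder := integral_exp_mean_pow_three_le (μ := (logisticWeight r).restrict (Icc 0 t))
    (X := fun s => -(r + 3 * σ ^ 2) * (t - s) + 2 * σ * (b t - b s))
    (Y := fun s => -r * (t - s) - σ * (b t - b s))
    (by fun_prop : Continuous _).integrableOn_Icc (by fun_prop : Continuous _).integrableOn_Icc
  have hmean : ∀ s, (-(r + 3 * σ ^ 2) * (t - s) + 2 * σ * (b t - b s) +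
      2 * (-r * (t - s) - σ * (b t - b s))) / 3 = -(r + σ ^ 2) * (t - s) := fun s => by ring
  simp only [hmean] at hHolder
  calc G ^ 2 * (∫ s in Icc 0 t, exp (-(r + σ ^ 2) * (t - s)) ∂logisticWeight r) ^ 3
      ≤ G ^ 2 * (N * I ^ 2) := by gcongr
    _ = N * (G * I) ^ 2 := by ring
    _ = N := by rw [hGI, one_pow, mul_one]

theorem div_le_setIntegral_Icc_logisticWeight_exp {r t c : ℝ} (hr : 0 < r) (hrc : r ≤ c)
    (ht : 0 ≤ t) : r / c ≤ ∫ s in Icc 0 t, exp (-c * (t - s)) ∂logisticWeight r := by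
  have hc : 0 < c := hr.trans_le hrc
  rw [setIntegral_Icc_logisticWeight_exp hr.le ht hc.ne']
  have : r / c ≤ 1 := div_le_one_of_le₀ hrc hc.le
  nlinarith [exp_pos (-c * t)]

theorem exists_modification_forall_of_ae {T E Ω : Type*} [MeasurableSpace Ω] [MeasurableSpace E]
    [Zero E] {μ : Measure Ω} {X : T → Ω → E} (hX : ∀ t, Measurable (X t))
    {p : (T → E) → Prop} (hp0 : p 0) (hp : ∀ᵐ ω ∂μ, p fun t => X t ω) :
    ∃ Y : T → Ω → E, (∀ t, Measurable (Y t)) ∧ (∀ ω, p fun t => Y t ω) ∧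
      ∀ᵐ ω ∂μ, ∀ t, Y t ω = X t ω := by
  obtain ⟨S, hbad, hSmeas, hS0⟩ := exists_measurable_superset_of_null (ae_iff.mp hp)
  refine ⟨fun t => Sᶜ.indicator (X t), fun t => (hX t).indicator hSmeas.compl, fun ω => ?_, ?_⟩
  · by_cases hω : ω ∈ S
    · simpa [hω] using (show p fun _ => 0 from hp0)
    · simpa [hω] using not_not.mp (mt (@hbad ω) hω)
  · filter_upwards [measure_eq_zero_iff_ae_notMem.mp hS0] with ω hω t
    exact indicator_of_mem hω _

section GaussianIncrements

variable {Ω : Type*} [MeasurableSpace Ω] {P : Measure Ω} {W : ℝ → Ω → ℝ}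
  (hW : ∀ s t, 0 ≤ s → s ≤ t → P.map (fun ω => W t ω - W s ω) = gaussianReal 0 (t - s).toNNReal)
include hW

theorem integral_exp_increment {s t : ℝ} (hs : 0 ≤ s) (hst : s ≤ t) (κ a : ℝ) :
    ∫ ω, exp (κ * (t - s) + a * (W t ω - W s ω)) ∂P = exp ((κ + a ^ 2 / 2) * (t - s)) := by
  have hmgf : ∫ ω, exp (a * (W t ω - W s ω)) ∂P = _ := mgf_gaussianReal (hW s t hs hst) a
  simp_rw [exp_add, MeasureTheory.integral_const_mul, hmgf, ← exp_add,
    Real.coe_toNNReal _ (sub_nonneg.mpr hst)]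
  ring_nf

variable [IsProbabilityMeasure P]

theorem integrable_exp_increment {s t : ℝ} (hs : 0 ≤ s) (hst : s ≤ t) (κ a : ℝ) :
    Integrable (fun ω => exp (κ * (t - s) + a * (W t ω - W s ω))) P := by
  have hmgf := mgf_gaussianReal (hW s t hs hst) a
  simp_rw [exp_add]
  exact (mgf_pos_iff.mp (hmgf ▸ exp_pos _)).const_mul _

variable (hWmeas : ∀ t, Measurable (W t)) (hWcont : ∀ ω, Continuous fun t => W t ω)
  {μ : Measure ℝ} [IsFiniteMeasureOnCompacts μ] {t : ℝ} (κ a : ℝ)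
include hWmeas hWcont

theorem integrable_prod_exp_increment :
    Integrable (fun p : ℝ × Ω => exp (κ * (t - p.1) + a * (W t p.2 - W p.1 p.2)))
      ((μ.restrict (Icc 0 t)).prod P) := by
  have hmeas : Measurable fun p : ℝ × Ω => exp (κ * (t - p.1) + a * (W t p.2 - W p.1 p.2)) := by
    have hjoint : Measurable fun p : ℝ × Ω => W p.1 p.2 :=
      measurable_uncurry_of_continuous_of_measurable hWcont hWmeas
    have hWt : Measurable fun p : ℝ × Ω => W t p.2 := (hWmeas t).comp measurable_snd
    fun_prop
  refine (integrable_prod_iff hmeas.aestronglyMeasurable).mpr ⟨?_, ?_⟩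
  · filter_upwards [ae_restrict_mem measurableSet_Icc] with s hs
    exact integrable_exp_increment hW hs.1 hs.2 κ a
  · refine (Continuous.integrableOn_Icc (f := fun s => exp ((κ + a ^ 2 / 2) * (t - s)))
      (by fun_prop)).congr ?_
    filter_upwards [ae_restrict_mem measurableSet_Icc] with s hs
    simp only [Real.norm_eq_abs, abs_of_pos (exp_pos _)]
    exact (integral_exp_increment hW hs.1 hs.2 κ a).symm

theorem integrable_setIntegral_exp_increment :
    Integrable (fun ω => ∫ s in Icc 0 t, exp (κ * (t - s) + a * (W t ω - W s ω)) ∂μ) P :=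
  (integrable_prod_exp_increment hW hWmeas hWcont κ a).integral_prod_right

theorem integral_setIntegral_exp_increment :
    ∫ ω, ∫ s in Icc 0 t, exp (κ * (t - s) + a * (W t ω - W s ω)) ∂μ ∂P =
      ∫ s in Icc 0 t, exp ((κ + a ^ 2 / 2) * (t - s)) ∂μ := by
  rw [← integral_integral_swap (integrable_prod_exp_increment hW hWmeas hWcont κ a)]
  exact setIntegral_congr_fun measurableSet_Icc fun s hs => integral_exp_increment hW hs.1 hs.2 κ a

theorem integral_logistic_sq_le (hW0 : ∀ ω, W 0 ω = 0) {r σ : ℝ} (hr : 0 < r) (ht : 0 ≤ t) :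
    ∫ ω, (exp (r * t + σ * W t ω) / (1 + r * ∫ s in 0..t, exp (r * s + σ * W s ω))) ^ 2 ∂P ≤
      (1 + σ ^ 2 / r) ^ 2 := by
  set D := ∫ s in Icc 0 t, exp (-(r + σ ^ 2) * (t - s)) ∂logisticWeight r
  have hrD : r / (r + σ ^ 2) ≤ D :=
    div_le_setIntegral_Icc_logisticWeight_exp hr (by nlinarith [sq_nonneg σ]) ht
  have hD : 0 < D := (by positivity : 0 < r / (r + σ ^ 2)).trans_le hrD
  set N := fun ω => ∫ s in Icc 0 t,
    exp (-(r + 3 * σ ^ 2) * (t - s) + 2 * σ * (W t ω - W s ω)) ∂logisticWeight r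
  have hN : ∫ ω, N ω ∂P = D := by
    rw [integral_setIntegral_exp_increment hW hWmeas hWcont]
    simp only [show -(r + 3 * σ ^ 2) + (2 * σ) ^ 2 / 2 = -(r + σ ^ 2) by ring, D]
  have hpath (ω : Ω) : (exp (r * t + σ * W t ω) /
      (1 + r * ∫ s in 0..t, exp (r * s + σ * W s ω))) ^ 2 ≤ N ω / D ^ 3 := by
    rw [le_div_iff₀ (by positivity)]
    exact logistic_sq_mul_pow_three_le hr.le ht (hWcont ω) (hW0 ω)
  calc _ ≤ ∫ ω, N ω / D ^ 3 ∂P :=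
        integral_mono_of_nonneg (ae_of_all _ fun _ => sq_nonneg _)
          ((integrable_setIntegral_exp_increment hW hWmeas hWcont _ _).div_const _)
          (ae_of_all _ hpath)
    _ = 1 / D ^ 2 := by
        rw [MeasureTheory.integral_div, hN]
        field_simp
    _ ≤ 1 / (r / (r + σ ^ 2)) ^ 2 := by gcongr
    _ = (1 + σ ^ 2 / r) ^ 2 := by field_simp

end GaussianIncrements

theorem logistic_second_moment_bound_general
    {Ω : Type*} [MeasureSpace Ω] [IsProbabilityMeasure (ℙ : Measure Ω)]
    (r σ : ℝ) (hr : 0 < r)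
    (B : ℝ → Ω → ℝ)
    (hBmeas : ∀ t, Measurable (B t))
    (hB0 : ∀ᵐ ω ∂(ℙ : Measure Ω), B 0 ω = 0)
    (hBcont : ∀ᵐ ω ∂(ℙ : Measure Ω), Continuous fun t => B t ω)
    (hBgauss : ∀ s t : ℝ, 0 ≤ s → s ≤ t →
      Measure.map (fun ω => B t ω - B s ω) ℙ = gaussianReal 0 (Real.toNNReal (t - s)))
    (g : ℝ → Ω → ℝ)
    (hg : ∀ (t : ℝ) (ω : Ω), g t ω =
      Real.exp (r * t + σ * B t ω) /
        (1 + r * ∫ s in (0:ℝ)..t, Real.exp (r * s + σ * B s ω))) :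
    ∀ t : ℝ, 0 ≤ t →
      ∫ ω, (g t ω) ^ 2 ∂(ℙ : Measure Ω) ≤ (1 + σ ^ 2 / r) ^ 2 := by
  intro t ht
  obtain ⟨W, hWmeas, hWpath, hWB⟩ := exists_modification_forall_of_ae hBmeas
    (p := fun b => Continuous b ∧ b 0 = 0) ⟨continuous_const, rfl⟩ (hBcont.and hB0)
  have hWgauss (s t : ℝ) (hs : 0 ≤ s) (hst : s ≤ t) :
      Measure.map (fun ω => W t ω - W s ω) ℙ = gaussianReal 0 (t - s).toNNReal := by
    rw [← hBgauss s t hs hst]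
    exact Measure.map_congr (hWB.mono fun ω h => by simp only [h])
  calc ∫ ω, g t ω ^ 2 ∂ℙ
      = ∫ ω, (exp (r * t + σ * W t ω) / (1 + r * ∫ s in 0..t, exp (r * s + σ * W s ω))) ^ 2 ∂ℙ :=
        integral_congr_ae (hWB.mono fun ω hω => by simp only [hg, hω])
    _ ≤ (1 + σ ^ 2 / r) ^ 2 :=
        integral_logistic_sq_le hWgauss hWmeas (fun ω => (hWpath ω).1) (fun ω => (hWpath ω).2) hr ht

/-- **Uniform second-moment bound for the logistic solution** (equation (4.14)).
For the logistic solution `g(t,ω) = e^{rt + σB_t} / (1 + r ∫₀ᵗ e^{rs + σB_s} ds)`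
driven by a standard Brownian motion, `𝔼[g(t)²] ≤ (1 + σ²/r)²` for all `t ≥ 0`. -/
theorem logistic_second_moment_bound
    {Ω : Type*} [MeasureSpace Ω] [IsProbabilityMeasure (ℙ : Measure Ω)]
    (r σ : ℝ) (hr : 0 < r)
    (B : ℝ → Ω → ℝ)
    (hBmeas : ∀ t, Measurable (B t))
    (hB0 : ∀ᵐ ω ∂(ℙ : Measure Ω), B 0 ω = 0)
    (hBcont : ∀ᵐ ω ∂(ℙ : Measure Ω), Continuous fun t => B t ω)
    (hBindep : ∀ (m : ℕ) (t : Fin (m + 1) → ℝ), (∀ i, 0 ≤ t i) → Monotone t →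
      iIndepFun
        (fun (i : Fin m) ω => B (t i.succ) ω - B (t i.castSucc) ω) ℙ)
    (hBgauss : ∀ s t : ℝ, 0 ≤ s → s ≤ t →
      Measure.map (fun ω => B t ω - B s ω) ℙ = gaussianReal 0 (Real.toNNReal (t - s)))
    (g : ℝ → Ω → ℝ)
    (hg : ∀ (t : ℝ) (ω : Ω), g t ω =
      Real.exp (r * t + σ * B t ω) /
        (1 + r * ∫ s in (0:ℝ)..t, Real.exp (r * s + σ * B s ω))) :
    ∀ t : ℝ, 0 ≤ t →
      ∫ ω, (g t ω) ^ 2 ∂(ℙ : Measure Ω) ≤ (1 + σ ^ 2 / r) ^ 2 :=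
  logistic_second_moment_bound_general r σ hr B hBmeas hB0 hBcont hBgauss g hg
end

section
/- Uniform L¹-convergence of solutions as the noise vanishes (Proposition 5.1): Let K ⊆ ℝ₊ⁿ be compact and suppose there is a constant C₀ such that for all y ∈ K and all t ≥ 0, ‖Ψ(t,y)‖ ≤ C₀ and ‖F(Ψ(t,y))‖ ≤ C₀, where F is the Lotka–Volterra vector field Fᵢ(y) = yᵢ·(r + Σⱼ a i j·yⱼ). Fix T > 0. Then there exists a constant C (depending on K and T) such that for every σ with 0 < σ² ≤ r/2, sup_{y ∈ K} 𝔼[‖Φ^σ(T,·,y) − Ψ(T,y)‖] ≤ C·|σ|. In particular, for every δ > 0, sup_{y ∈ K} ℙ({ω : ‖Φ^σ(T,ω,y) − Ψ(T,y)‖ ≥ δ}) → 0 as σ → 0. -/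
/-!
The noisy solution is a random rescaling and time change of the deterministic flow,
`Φ^σ(T) = g^σ(T) • Ψ(τ^σ, y)` with `τ^σ = ∫₀ᵀ g^σ`. As `Ψ(·, y)` is bounded by `C₀` and
`C₀`-Lipschitz in time, `‖Φ^σ(T) - Ψ(T, y)‖ ≤ C₀ (|g^σ(T) - 1| + |τ^σ - T|)`. Comparing
`g^σ` with the noiseless solution `g⁰ ≡ 1` bounds both terms pathwise by the noise factors
`|exp (σ B_u) - 1|`, `u ≤ T`. Since `B_u` is centred Gaussian with variance `u`, the Gaussian
moment generating function and AM-GM give `𝔼 |exp (σ B_u) - 1| = O(|σ|)` uniformly in `u ≤ T`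
once `2σ² ≤ r`. Markov's inequality turns the `L¹` bound into the convergence in probability.
-/

open Real Filter Topology MeasureTheory ProbabilityTheory

noncomputable section

def noisyLogistic (r σ : ℝ) (b : ℝ → ℝ) (t : ℝ) : ℝ :=
  exp (r * t + σ * b t) / (1 + r * ∫ s in (0:ℝ)..t, exp (r * s + σ * b s))

def noiseDeviation (r σ : ℝ) (b : ℝ → ℝ) (t : ℝ) : ℝ :=
  ∫ u in (0:ℝ)..t, exp (r * u) * |exp (σ * b u) - 1|

def noisyLogisticError (r σ : ℝ) (b : ℝ → ℝ) (T : ℝ) : ℝ :=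
  exp (r * T) * |exp (σ * b T) - 1| + (1 + r + r * T) * noiseDeviation r σ b T

end

lemma norm_smul_sub_le_of_hasDerivAt {E : Type*} [NormedAddCommGroup E] [NormedSpace ℝ E]
    {f f' : ℝ → E} {C₀ : ℝ} (hf : ∀ t, 0 ≤ t → HasDerivAt f (f' t) t)
    (hfC : ∀ t, 0 ≤ t → ‖f t‖ ≤ C₀) (hf'C : ∀ t, 0 ≤ t → ‖f' t‖ ≤ C₀)
    (c : ℝ) {τ T : ℝ} (hτ : 0 ≤ τ) (hT : 0 ≤ T) :
    ‖c • f τ - f T‖ ≤ C₀ * (|c - 1| + |τ - T|) := by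
  have hlip : ‖f τ - f T‖ ≤ C₀ * ‖τ - T‖ :=
    (convex_Ici 0).norm_image_sub_le_of_norm_hasDerivWithin_le
      (fun t ht => (hf t ht).hasDerivWithinAt) hf'C hT hτ
  calc ‖c • f τ - f T‖ = ‖(c - 1) • f τ + (f τ - f T)‖ := by
        rw [sub_smul, one_smul]; abel_nf
    _ ≤ |c - 1| * C₀ + C₀ * |τ - T| := by
        refine (norm_add_le _ _).trans (add_le_add ?_ hlip)
        rw [norm_smul, Real.norm_eq_abs]
        exact mul_le_mul_of_nonneg_left (hfC τ hτ) (abs_nonneg _)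
    _ = C₀ * (|c - 1| + |τ - T|) := by ring

section NoisyLogistic

open intervalIntegral

lemma mul_integral_exp_mul (r s : ℝ) : r * ∫ u in (0:ℝ)..s, exp (r * u) = exp (r * s) - 1 := by
  rcases eq_or_ne r 0 with rfl | hr
  · simp
  · rw [integral_comp_mul_left (fun x => exp x) hr, integral_exp, smul_eq_mul, mul_zero,
      exp_zero, mul_inv_cancel_left₀ hr]

variable {r σ : ℝ} {b : ℝ → ℝ}

lemma one_le_one_add_mul_integral_exp_s15 (hr : 0 ≤ r) {s : ℝ} (hs : 0 ≤ s) :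
    1 ≤ 1 + r * ∫ u in (0:ℝ)..s, exp (r * u + σ * b u) := by
  have := integral_nonneg (μ := volume) hs fun u _ => (exp_pos (r * u + σ * b u)).le
  nlinarith

lemma noisyLogistic_nonneg (hr : 0 ≤ r) {s : ℝ} (hs : 0 ≤ s) : 0 ≤ noisyLogistic r σ b s :=
  div_nonneg (exp_pos _).le (zero_le_one.trans (one_le_one_add_mul_integral_exp_s15 hr hs))

lemma continuousOn_noisyLogistic (hr : 0 ≤ r) (hb : Continuous b) :
    ContinuousOn (noisyLogistic r σ b) (Set.Ici 0) := by
  have hh : Continuous fun u => exp (r * u + σ * b u) := by fun_prop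
  refine (hh.continuousOn).div (continuous_const.add (continuous_const.mul
    (continuous_primitive (fun _ _ => hh.intervalIntegrable _ _) 0))).continuousOn ?_
  intro s hs
  exact (zero_lt_one.trans_le (one_le_one_add_mul_integral_exp_s15 hr hs)).ne'

lemma noiseDeviation_mono (hb : Continuous b) {s t : ℝ} (hs : 0 ≤ s) (hst : s ≤ t) :
    noiseDeviation r σ b s ≤ noiseDeviation r σ b t :=
  integral_mono_interval le_rfl hs hst
    (.of_forall fun _ => mul_nonneg (exp_pos _).le (abs_nonneg _))
    (Continuous.intervalIntegrable (by fun_prop) _ _)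

-- At `σ = 0` numerator and denominator agree, since `r ∫₀ˢ exp (r u) du = exp (r s) - 1`;
-- the difference is therefore linear in the noise factors `exp (σ b u) - 1`.
lemma logistic_numerator_sub_denominator (hb : Continuous b) (s : ℝ) :
    exp (r * s + σ * b s) - (1 + r * ∫ u in (0:ℝ)..s, exp (r * u + σ * b u)) =
      exp (r * s) * (exp (σ * b s) - 1) -
        r * ∫ u in (0:ℝ)..s, exp (r * u) * (exp (σ * b u) - 1) := by
  have hsplit : ∀ u, exp (r * u) * (exp (σ * b u) - 1) = exp (r * u + σ * b u) - exp (r * u) :=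
    fun u => by rw [exp_add]; ring
  simp_rw [hsplit]
  rw [integral_sub (Continuous.intervalIntegrable (by fun_prop) _ _)
    (Continuous.intervalIntegrable (by fun_prop) _ _), mul_sub, mul_integral_exp_mul, exp_add]
  ring

lemma abs_noisyLogistic_sub_one_le (hr : 0 ≤ r) (hb : Continuous b) {s : ℝ} (hs : 0 ≤ s) :
    |noisyLogistic r σ b s - 1| ≤
      exp (r * s) * |exp (σ * b s) - 1| + r * noiseDeviation r σ b s := by
  have hD := one_le_one_add_mul_integral_exp_s15 (σ := σ) (b := b) hr hs
  have hnoise :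
      |∫ u in (0:ℝ)..s, exp (r * u) * (exp (σ * b u) - 1)| ≤ noiseDeviation r σ b s := by
    refine (abs_integral_le_integral_abs hs).trans_eq (integral_congr fun u _ => ?_)
    simp only [abs_mul, abs_exp]
  calc |noisyLogistic r σ b s - 1|
      ≤ |exp (r * s + σ * b s) - (1 + r * ∫ u in (0:ℝ)..s, exp (r * u + σ * b u))| := by
        rw [noisyLogistic, div_sub_one (by linarith), abs_div,
          abs_of_pos (zero_lt_one.trans_le hD)]
        exact div_le_self (abs_nonneg _) hD
    _ ≤ exp (r * s) * |exp (σ * b s) - 1| +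
          r * |∫ u in (0:ℝ)..s, exp (r * u) * (exp (σ * b u) - 1)| := by
        rw [logistic_numerator_sub_denominator hb]
        refine (abs_sub _ _).trans_eq ?_
        rw [abs_mul, abs_mul, abs_exp, abs_of_nonneg hr]
    _ ≤ _ := by gcongr

lemma abs_integral_noisyLogistic_sub_le (hr : 0 ≤ r) (hb : Continuous b) {T : ℝ}
    (hT : 0 ≤ T) :
    |(∫ u in (0:ℝ)..T, noisyLogistic r σ b u) - T| ≤ (1 + r * T) * noiseDeviation r σ b T := by
  have hcont : ContinuousOn (noisyLogistic r σ b) (Set.uIcc 0 T) :=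
    (continuousOn_noisyLogistic hr hb).mono
      (by simp [Set.uIcc_of_le hT, Set.Icc_subset_Ici_self])
  have hW : IntervalIntegrable (fun u => exp (r * u) * |exp (σ * b u) - 1|) volume 0 T :=
    Continuous.intervalIntegrable (by fun_prop) _ _
  calc |(∫ u in (0:ℝ)..T, noisyLogistic r σ b u) - T|
      = |∫ u in (0:ℝ)..T, (noisyLogistic r σ b u - 1)| := by
        rw [integral_sub hcont.intervalIntegrable intervalIntegrable_const]; simp
    _ ≤ ∫ u in (0:ℝ)..T, |noisyLogistic r σ b u - 1| := abs_integral_le_integral_abs hT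
    _ ≤ ∫ u in (0:ℝ)..T,
          (exp (r * u) * |exp (σ * b u) - 1| + r * noiseDeviation r σ b T) := by
        refine integral_mono_on hT (hcont.sub continuousOn_const).abs.intervalIntegrable
          (hW.add intervalIntegrable_const) fun u hu => ?_
        have := noiseDeviation_mono (r := r) (σ := σ) hb hu.1 hu.2
        have := abs_noisyLogistic_sub_one_le (σ := σ) hr hb hu.1
        nlinarith
    _ = (1 + r * T) * noiseDeviation r σ b T := by
        rw [integral_add hW intervalIntegrable_const, intervalIntegral.integral_const,
          ← noiseDeviation]
        simp only [sub_zero, smul_eq_mul]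
        ring

lemma norm_noisyLogistic_smul_sub_le {E : Type*} [NormedAddCommGroup E] [NormedSpace ℝ E]
    {f f' : ℝ → E} {C₀ : ℝ} (hf : ∀ t, 0 ≤ t → HasDerivAt f (f' t) t)
    (hfC : ∀ t, 0 ≤ t → ‖f t‖ ≤ C₀) (hf'C : ∀ t, 0 ≤ t → ‖f' t‖ ≤ C₀)
    (hr : 0 ≤ r) (hb : Continuous b) {T : ℝ} (hT : 0 ≤ T) :
    ‖noisyLogistic r σ b T • f (∫ u in (0:ℝ)..T, noisyLogistic r σ b u) - f T‖ ≤
      C₀ * noisyLogisticError r σ b T := by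
  have hC₀ : 0 ≤ C₀ := (norm_nonneg _).trans (hfC T hT)
  have hτ : 0 ≤ ∫ u in (0:ℝ)..T, noisyLogistic r σ b u :=
    intervalIntegral.integral_nonneg hT fun u hu => noisyLogistic_nonneg hr hu.1
  refine (norm_smul_sub_le_of_hasDerivAt hf hfC hf'C _ hτ hT).trans
    (mul_le_mul_of_nonneg_left ?_ hC₀)
  have h1 := abs_noisyLogistic_sub_one_le (σ := σ) hr hb hT
  have h2 := abs_integral_noisyLogistic_sub_le (σ := σ) hr hb hT
  rw [noisyLogisticError]
  linarith

end NoisyLogistic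

section GaussianExp

variable {Ω : Type*} [MeasurableSpace Ω] {P : Measure Ω} {X : Ω → ℝ} {v : NNReal}

lemma integral_exp_mul_of_map_eq_gaussianReal (hX : P.map X = gaussianReal 0 v) (t : ℝ) :
    ∫ ω, exp (t * X ω) ∂P = exp (v * t ^ 2 / 2) := by
  have := mgf_gaussianReal hX t
  rwa [zero_mul, zero_add] at this

variable [IsProbabilityMeasure P]

lemma integrable_exp_mul_of_map_eq_gaussianReal (hX : P.map X = gaussianReal 0 v) (t : ℝ) :
    Integrable (fun ω => exp (t * X ω)) P :=
  mgf_pos_iff.1 (by rw [mgf_gaussianReal hX]; exact exp_pos _)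

lemma sq_exp_mul_sub_one (σ x : ℝ) :
    (exp (σ * x) - 1) ^ 2 = exp ((2 * σ) * x) - 2 * exp (σ * x) + 1 := by
  rw [mul_assoc, two_mul (σ * x), exp_add]; ring

lemma integrable_sq_exp_mul_sub_one (hX : P.map X = gaussianReal 0 v) (σ : ℝ) :
    Integrable (fun ω => (exp (σ * X ω) - 1) ^ 2) P := by
  simp_rw [sq_exp_mul_sub_one]
  exact ((integrable_exp_mul_of_map_eq_gaussianReal hX (2 * σ)).sub
    ((integrable_exp_mul_of_map_eq_gaussianReal hX σ).const_mul 2)).add (integrable_const 1)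

lemma integral_sq_exp_mul_sub_one_le (hX : P.map X = gaussianReal 0 v) (σ : ℝ) :
    ∫ ω, (exp (σ * X ω) - 1) ^ 2 ∂P ≤ 2 * σ ^ 2 * v * exp (2 * σ ^ 2 * v) := by
  have h1 := integrable_exp_mul_of_map_eq_gaussianReal hX σ
  have h2 : Integrable (fun ω => exp ((2 * σ) * X ω) - 2 * exp (σ * X ω)) P :=
    (integrable_exp_mul_of_map_eq_gaussianReal hX (2 * σ)).sub (h1.const_mul 2)
  simp_rw [sq_exp_mul_sub_one]
  rw [integral_add h2 (integrable_const 1),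
    integral_sub (integrable_exp_mul_of_map_eq_gaussianReal hX (2 * σ)) (h1.const_mul 2),
    integral_const_mul, integral_exp_mul_of_map_eq_gaussianReal hX,
    integral_exp_mul_of_map_eq_gaussianReal hX]
  -- `exp a - 1 ≤ a exp a` is `1 - a ≤ exp (-a)` multiplied by `exp a`
  have hle : exp (2 * σ ^ 2 * v) - 1 ≤ 2 * σ ^ 2 * v * exp (2 * σ ^ 2 * v) := by
    have h := mul_le_mul_of_nonneg_right (one_sub_le_exp_neg (2 * σ ^ 2 * v))
      (exp_pos (2 * σ ^ 2 * v)).le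
    rw [← exp_add, neg_add_cancel, exp_zero] at h
    linarith
  have hone : 1 ≤ exp (v * σ ^ 2 / 2) := one_le_exp (by positivity)
  rw [show (v : ℝ) * (2 * σ) ^ 2 / 2 = 2 * σ ^ 2 * v by ring]
  simp only [integral_const, probReal_univ, smul_eq_mul, mul_one]
  linarith

lemma integrable_abs_exp_mul_sub_one (hX : P.map X = gaussianReal 0 v) (σ : ℝ) :
    Integrable (fun ω => |exp (σ * X ω) - 1|) P :=
  ((integrable_exp_mul_of_map_eq_gaussianReal hX σ).sub (integrable_const 1)).abs

lemma integral_abs_exp_mul_sub_one_le (hX : P.map X = gaussianReal 0 v) (σ : ℝ) :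
    ∫ ω, |exp (σ * X ω) - 1| ∂P ≤ |σ| * (v * exp (2 * σ ^ 2 * v) + 1 / 2) := by
  rcases eq_or_ne σ 0 with rfl | hσ
  · simp
  have hσ' : 0 < |σ| := abs_pos.2 hσ
  have hsq := integrable_sq_exp_mul_sub_one hX σ
  -- AM-GM, weighted so that both terms of the final bound are linear in `|σ|`
  have hamgm : ∀ z : ℝ, |z| ≤ z ^ 2 / (2 * |σ|) + |σ| / 2 := fun z => by
    rw [div_add_div _ _ (by positivity) two_ne_zero, le_div_iff₀ (by positivity)]
    nlinarith [sq_nonneg (|z| - |σ|), sq_abs z]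
  calc ∫ ω, |exp (σ * X ω) - 1| ∂P
      ≤ ∫ ω, ((exp (σ * X ω) - 1) ^ 2 / (2 * |σ|) + |σ| / 2) ∂P :=
        integral_mono (integrable_abs_exp_mul_sub_one hX σ)
          ((hsq.div_const _).add (integrable_const _)) fun ω => hamgm _
    _ = (∫ ω, (exp (σ * X ω) - 1) ^ 2 ∂P) / (2 * |σ|) + |σ| / 2 := by
        rw [integral_add (hsq.div_const _) (integrable_const _), MeasureTheory.integral_div]; simp
    _ ≤ 2 * σ ^ 2 * v * exp (2 * σ ^ 2 * v) / (2 * |σ|) + |σ| / 2 := by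
        gcongr; exact integral_sq_exp_mul_sub_one_le hX σ
    _ = |σ| * (v * exp (2 * σ ^ 2 * v) + 1 / 2) := by
        rw [← sq_abs σ]; field_simp

end GaussianExp

lemma exists_continuous_modification {Ω : Type*} [MeasurableSpace Ω] {μ : Measure Ω}
    {B : ℝ → Ω → ℝ} (hBmeas : ∀ t, Measurable (B t))
    (hBcont : ∀ᵐ ω ∂μ, Continuous fun t => B t ω) :
    ∃ B' : ℝ → Ω → ℝ, (∀ t, Measurable (B' t)) ∧ (∀ ω, Continuous fun t => B' t ω) ∧
      ∀ᵐ ω ∂μ, ∀ t, B' t ω = B t ω := by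
  obtain ⟨S, hSae, hSmeas, hS⟩ := hBcont.exists_measurable_mem
  refine ⟨fun t => S.indicator (B t), fun t => (hBmeas t).indicator hSmeas, fun ω => ?_,
    Filter.mem_of_superset hSae fun ω hω t => Set.indicator_of_mem hω _⟩
  by_cases hω : ω ∈ S
  · simpa only [Set.indicator_of_mem hω] using hS ω hω
  · simpa only [Set.indicator_of_notMem hω] using continuous_const

lemma map_eq_of_forall_ae_eq {Ω : Type*} [MeasurableSpace Ω] {P : Measure Ω}
    {B W : ℝ → Ω → ℝ} (hWB : ∀ᵐ ω ∂P, ∀ t, W t ω = B t ω) (hB0 : ∀ᵐ ω ∂P, B 0 ω = 0)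
    {t : ℝ} {ν : Measure ℝ} (hBt : P.map (fun ω => B t ω - B 0 ω) = ν) : P.map (W t) = ν := by
  refine (Measure.map_congr ?_).trans hBt
  filter_upwards [hWB, hB0] with ω hω hω0
  rw [hω, hω0, sub_zero]

lemma integrable_intervalIntegral_and_integral_le {Ω : Type*} [MeasurableSpace Ω]
    {μ : Measure Ω} [IsFiniteMeasure μ] {F : Ω → ℝ → ℝ} (hF : Measurable (Function.uncurry F))
    (hF0 : ∀ ω u, 0 ≤ F ω u) {T M : ℝ} (hT : 0 ≤ T)
    (hFu : ∀ u ∈ Set.Ioc 0 T, Integrable (F · u) μ)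
    (hM : ∀ u ∈ Set.Ioc 0 T, ∫ ω, F ω u ∂μ ≤ M) :
    Integrable (fun ω => ∫ u in (0:ℝ)..T, F ω u) μ ∧
      ∫ ω, (∫ u in (0:ℝ)..T, F ω u) ∂μ ≤ M * T := by
  set ν := volume.restrict (Set.Ioc (0:ℝ) T)
  have hFm : StronglyMeasurable (Function.uncurry F) := hF.stronglyMeasurable
  have hbound : ∀ᵐ u ∂ν, ‖∫ ω, ‖F ω u‖ ∂μ‖ ≤ M := by
    refine (ae_restrict_iff' measurableSet_Ioc).2 (.of_forall fun u hu => ?_)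
    simp only [Real.norm_eq_abs, abs_of_nonneg (hF0 _ _)]
    exact (abs_of_nonneg (integral_nonneg fun ω => hF0 ω u)).trans_le (hM u hu)
  have hint : Integrable (Function.uncurry F) (μ.prod ν) := by
    refine (integrable_prod_iff' hFm.aestronglyMeasurable).2
      ⟨(ae_restrict_iff' measurableSet_Ioc).2 (.of_forall hFu), ?_⟩
    exact Integrable.of_bound hFm.norm.integral_prod_left'.aestronglyMeasurable M hbound
  simp_rw [intervalIntegral.integral_of_le hT]
  refine ⟨hint.integral_prod_left, ?_⟩
  calc ∫ ω, (∫ u in Set.Ioc 0 T, F ω u) ∂μ = ∫ u in Set.Ioc 0 T, ∫ ω, F ω u ∂μ :=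
        integral_integral_swap hint
    _ ≤ ∫ _ in Set.Ioc 0 T, M := by
        exact setIntegral_mono_on hint.integral_prod_right (integrable_const M)
          measurableSet_Ioc hM
    _ = M * T := by simp [hT, mul_comm]

section ContinuousPaths

variable {Ω : Type*} [MeasurableSpace Ω] {P : Measure Ω} [IsProbabilityMeasure P]
  {X : ℝ → Ω → ℝ} {r σ T : ℝ}

lemma integral_abs_exp_mul_sub_one_le_of_le {u : ℝ}
    (hXu : P.map (X u) = gaussianReal 0 u.toNNReal) (hσ : 2 * σ ^ 2 ≤ r) (hu : 0 ≤ u)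
    (huT : u ≤ T) :
    ∫ ω, |exp (σ * X u ω) - 1| ∂P ≤ |σ| * (T * exp (r * T) + 1 / 2) := by
  refine (integral_abs_exp_mul_sub_one_le hXu σ).trans ?_
  rw [Real.coe_toNNReal u hu]
  gcongr
  · nlinarith
  · nlinarith

lemma integrable_and_integral_noisyLogisticError_le (hXmeas : ∀ t, Measurable (X t))
    (hXcont : ∀ ω, Continuous fun t => X t ω)
    (hX : ∀ t, 0 ≤ t → P.map (X t) = gaussianReal 0 t.toNNReal)
    (hσ : 2 * σ ^ 2 ≤ r) (hT : 0 ≤ T) :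
    Integrable (fun ω => noisyLogisticError r σ (X · ω) T) P ∧
      ∫ ω, noisyLogisticError r σ (X · ω) T ∂P ≤
        |σ| * (exp (r * T) * (T * exp (r * T) + 1 / 2) * (1 + (1 + r + r * T) * T)) := by
  have hr : 0 ≤ r := le_trans (by positivity) hσ
  set c := T * exp (r * T) + 1 / 2
  have hjoint : Measurable (Function.uncurry fun ω u => exp (r * u) * |exp (σ * X u ω) - 1|) := by
    have := (stronglyMeasurable_uncurry_of_continuous_of_stronglyMeasurable hXcont
      fun t => (hXmeas t).stronglyMeasurable).measurable.comp measurable_swap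
    exact (measurable_snd.const_mul r).exp.mul ((this.const_mul σ).exp.sub_const 1).abs
  obtain ⟨hDint, hDle⟩ := integrable_intervalIntegral_and_integral_le (μ := P)
    (M := exp (r * T) * (|σ| * c)) hjoint (fun _ _ => mul_nonneg (exp_pos _).le (abs_nonneg _)) hT
    (fun u hu => (integrable_abs_exp_mul_sub_one (hX u hu.1.le) σ).const_mul _) fun u hu => by
      rw [integral_const_mul]
      exact mul_le_mul (exp_le_exp.2 (by nlinarith [hu.2]))
        (integral_abs_exp_mul_sub_one_le_of_le (hX u hu.1.le) hσ hu.1.le hu.2)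
        (integral_nonneg fun _ => abs_nonneg _) (exp_pos _).le
  have hA := integrable_abs_exp_mul_sub_one (hX T hT) σ
  refine ⟨(hA.const_mul _).add (hDint.const_mul _), ?_⟩
  unfold noisyLogisticError noiseDeviation
  rw [integral_add (hA.const_mul _) (hDint.const_mul _), integral_const_mul, integral_const_mul]
  calc exp (r * T) * ∫ ω, |exp (σ * X T ω) - 1| ∂P +
        (1 + r + r * T) * ∫ ω, (∫ u in (0:ℝ)..T, exp (r * u) * |exp (σ * X u ω) - 1|) ∂P
      ≤ exp (r * T) * (|σ| * c) + (1 + r + r * T) * (exp (r * T) * (|σ| * c) * T) := by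
        gcongr
        exact integral_abs_exp_mul_sub_one_le_of_le (hX T hT) hσ hT le_rfl
    _ = |σ| * (exp (r * T) * c * (1 + (1 + r + r * T) * T)) := by ring

end ContinuousPaths

lemma measure_ge_le_ofReal_integral_div_of_ae_le {Ω : Type*} [MeasurableSpace Ω] {μ : Measure Ω}
    [IsFiniteMeasure μ] {f G : Ω → ℝ} (hf : 0 ≤ᵐ[μ] f) (hG : Integrable G μ) (hfG : f ≤ᵐ[μ] G)
    {δ : ℝ} (hδ : 0 < δ) :
    μ {ω | δ ≤ f ω} ≤ ENNReal.ofReal ((∫ ω, G ω ∂μ) / δ) := by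
  have hG0 : 0 ≤ᵐ[μ] G := hf.trans hfG
  calc μ {ω | δ ≤ f ω} ≤ μ {ω | δ ≤ G ω} :=
        measure_mono_ae (hfG.mono fun ω h (hω : δ ≤ f ω) => hω.trans h)
    _ ≤ ENNReal.ofReal ((∫ ω, G ω ∂μ) / δ) := by
        rw [ENNReal.le_ofReal_iff_toReal_le (measure_ne_top _ _)
          (div_nonneg (integral_nonneg_of_ae hG0) hδ.le), le_div_iff₀ hδ, mul_comm]
        exact mul_meas_ge_le_integral_of_nonneg hG0 hG δ

lemma tendsto_nhdsNE_zero_of_le_ofReal_mul_abs {u : ℝ → ENNReal} {C : ℝ}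
    (h : ∀ᶠ σ in 𝓝[≠] 0, u σ ≤ ENNReal.ofReal (C * |σ|)) : Tendsto u (𝓝[≠] 0) (𝓝 0) := by
  have hlim : Tendsto (fun σ : ℝ => ENNReal.ofReal (C * |σ|)) (𝓝 0) (𝓝 0) := by
    simpa using ENNReal.tendsto_ofReal ((continuous_const.mul continuous_abs).tendsto (0:ℝ))
  exact tendsto_of_tendsto_of_tendsto_of_le_of_le' tendsto_const_nhds
    (hlim.mono_left nhdsWithin_le_nhds) (.of_forall fun _ => zero_le) h

theorem uniform_L1_convergence_small_noise_general
    {Ω : Type*} [MeasureSpace Ω] [IsProbabilityMeasure (ℙ : Measure Ω)]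
    (n : ℕ) (r : ℝ) (hr : 0 < r)
    (a : Fin n → Fin n → ℝ)
    (Ψ : ℝ → (Fin n → ℝ) → Fin n → ℝ)
    (hΨ' : ∀ y : Fin n → ℝ, (∀ i, 0 ≤ y i) → ∀ t : ℝ, 0 ≤ t → ∀ i,
      HasDerivAt (fun t => Ψ t y i) (Ψ t y i * (r + ∑ j, a i j * Ψ t y j)) t)
    (B : ℝ → Ω → ℝ)
    (hBmeas : ∀ t, Measurable (B t))
    (hB0 : ∀ᵐ ω ∂(ℙ : Measure Ω), B 0 ω = 0)
    (hBcont : ∀ᵐ ω ∂(ℙ : Measure Ω), Continuous fun t => B t ω)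
    (hBgauss : ∀ s t : ℝ, 0 ≤ s → s ≤ t →
      Measure.map (fun ω => B t ω - B s ω) ℙ = gaussianReal 0 (Real.toNNReal (t - s)))
    -- the σ-parametrized logistic and Lotka–Volterra solutions
    (g : ℝ → ℝ → Ω → ℝ)
    (hg : ∀ (σ t : ℝ) (ω : Ω), g σ t ω =
      Real.exp (r * t + σ * B t ω) /
        (1 + r * ∫ s in (0:ℝ)..t, Real.exp (r * s + σ * B s ω)))
    (Φ : ℝ → ℝ → Ω → (Fin n → ℝ) → Fin n → ℝ)
    (hΦ : ∀ (σ t : ℝ) (ω : Ω) (y : Fin n → ℝ),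
      Φ σ t ω y = g σ t ω • Ψ (∫ s in (0:ℝ)..t, g σ s ω) y)
    -- a compact set of initial conditions with uniformly bounded forward orbits
    (K : Set (Fin n → ℝ)) (hKnn : ∀ y ∈ K, ∀ i, 0 ≤ y i)
    (C₀ : ℝ)
    (hC₀ : ∀ y ∈ K, ∀ t : ℝ, 0 ≤ t → ‖Ψ t y‖ ≤ C₀ ∧
      ‖fun i => Ψ t y i * (r + ∑ j, a i j * Ψ t y j)‖ ≤ C₀)
    (T : ℝ) (hT : 0 < T) :
    (∃ C : ℝ, ∀ σ : ℝ, 0 < σ ^ 2 → σ ^ 2 ≤ r / 2 → ∀ y ∈ K,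
      ∫ ω, ‖Φ σ T ω y - Ψ T y‖ ∂(ℙ : Measure Ω) ≤ C * |σ|) ∧
    ∀ δ : ℝ, 0 < δ →
      Tendsto (fun σ : ℝ => ⨆ y ∈ K, (ℙ : Measure Ω) {ω | δ ≤ ‖Φ σ T ω y - Ψ T y‖})
        (𝓝[≠] 0) (𝓝 0) := by
  obtain ⟨W, hWmeas, hWcont, hWB⟩ := exists_continuous_modification hBmeas hBcont
  have hWlaw : ∀ t, 0 ≤ t → (ℙ : Measure Ω).map (W t) = gaussianReal 0 t.toNNReal :=
    fun t ht => map_eq_of_forall_ae_eq hWB hB0 (by simpa using hBgauss 0 t le_rfl ht)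
  have hdom : ∀ σ : ℝ, ∀ y ∈ K, ∀ᵐ ω ∂(ℙ : Measure Ω),
      ‖Φ σ T ω y - Ψ T y‖ ≤ C₀ * noisyLogisticError r σ (W · ω) T := by
    intro σ y hy
    filter_upwards [hWB] with ω hω
    have hgW : ∀ t, g σ t ω = noisyLogistic r σ (W · ω) t := fun t => by
      simp only [hg, noisyLogistic, hω]
    simp only [hΦ, hgW]
    exact norm_noisyLogistic_smul_sub_le (fun t ht => hasDerivAt_pi.2 (hΨ' y (hKnn y hy) t ht))
      (fun t ht => (hC₀ y hy t ht).1) (fun t ht => (hC₀ y hy t ht).2) hr.le (hWcont ω) hT.le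
  set c := exp (r * T) * (T * exp (r * T) + 1 / 2) * (1 + (1 + r + r * T) * T)
  have hmean : ∀ σ : ℝ, σ ^ 2 ≤ r / 2 → ∀ y ∈ K,
      Integrable (fun ω => C₀ * noisyLogisticError r σ (W · ω) T) ℙ ∧
        ∫ ω, C₀ * noisyLogisticError r σ (W · ω) T ∂(ℙ : Measure Ω) ≤ C₀ * c * |σ| := by
    intro σ hσ y hy
    have hC₀ : 0 ≤ C₀ := (norm_nonneg _).trans (hC₀ y hy 0 le_rfl).1
    obtain ⟨hint, hle⟩ := integrable_and_integral_noisyLogisticError_le (r := r) (σ := σ)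
      hWmeas hWcont hWlaw (by linarith) hT.le
    refine ⟨hint.const_mul C₀, ?_⟩
    rw [integral_const_mul, mul_assoc, mul_comm c]
    exact mul_le_mul_of_nonneg_left hle hC₀
  refine ⟨⟨C₀ * c, fun σ _ hσ y hy => ?_⟩, fun δ hδ => ?_⟩
  · obtain ⟨hint, hle⟩ := hmean σ hσ y hy
    exact (integral_mono_of_nonneg (.of_forall fun _ => norm_nonneg _) hint
      (hdom σ y hy)).trans hle
  · have hsmall : ∀ᶠ σ in 𝓝[≠] (0:ℝ), σ ^ 2 ≤ r / 2 :=
      ((continuous_pow 2).tendsto' (0:ℝ) 0 (by simp)).eventually_le_const (by linarith)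
        |>.filter_mono nhdsWithin_le_nhds
    refine tendsto_nhdsNE_zero_of_le_ofReal_mul_abs (C := C₀ * c / δ) ?_
    filter_upwards [hsmall] with σ hσ
    refine iSup₂_le fun y hy => ?_
    obtain ⟨hint, hle⟩ := hmean σ hσ y hy
    refine (measure_ge_le_ofReal_integral_div_of_ae_le (.of_forall fun _ => norm_nonneg _) hint
      (hdom σ y hy) hδ).trans (ENNReal.ofReal_le_ofReal ?_)
    rw [div_mul_eq_mul_div]
    exact div_le_div_of_nonneg_right hle hδ.le

/-- **Uniform L¹-convergence of the stochastic solutions as the noise vanishes**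
(Proposition 5.1). Over a compact set `K` of initial data with uniformly bounded
forward orbits, `sup_{y ∈ K} 𝔼‖Φ^σ(T,·,y) - Ψ(T,y)‖ ≤ C |σ|` for all small noise
intensities `σ` (`0 < σ² ≤ r/2`), and consequently the probability of a deviation of
size `δ` tends to `0` uniformly on `K` as `σ → 0`. -/
theorem uniform_L1_convergence_small_noise
    {Ω : Type*} [MeasureSpace Ω] [IsProbabilityMeasure (ℙ : Measure Ω)]
    (n : ℕ) (r : ℝ) (hr : 0 < r)
    (a : Fin n → Fin n → ℝ)
    (Ψ : ℝ → (Fin n → ℝ) → Fin n → ℝ)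
    (hΨcont : ContinuousOn (fun p : ℝ × (Fin n → ℝ) => Ψ p.1 p.2)
      (Set.Ici 0 ×ˢ {y | ∀ i, 0 ≤ y i}))
    (hΨ0 : ∀ y : Fin n → ℝ, (∀ i, 0 ≤ y i) → Ψ 0 y = y)
    (hΨnn : ∀ t : ℝ, 0 ≤ t → ∀ y : Fin n → ℝ, (∀ i, 0 ≤ y i) → ∀ i, 0 ≤ Ψ t y i)
    (hΨ' : ∀ y : Fin n → ℝ, (∀ i, 0 ≤ y i) → ∀ t : ℝ, 0 ≤ t → ∀ i,
      HasDerivAt (fun t => Ψ t y i) (Ψ t y i * (r + ∑ j, a i j * Ψ t y j)) t)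
    (B : ℝ → Ω → ℝ)
    (hBmeas : ∀ t, Measurable (B t))
    (hB0 : ∀ᵐ ω ∂(ℙ : Measure Ω), B 0 ω = 0)
    (hBcont : ∀ᵐ ω ∂(ℙ : Measure Ω), Continuous fun t => B t ω)
    (hBindep : ∀ (m : ℕ) (t : Fin (m + 1) → ℝ), (∀ i, 0 ≤ t i) → Monotone t →
      iIndepFun
        (fun (i : Fin m) ω => B (t i.succ) ω - B (t i.castSucc) ω) ℙ)
    (hBgauss : ∀ s t : ℝ, 0 ≤ s → s ≤ t →
      Measure.map (fun ω => B t ω - B s ω) ℙ = gaussianReal 0 (Real.toNNReal (t - s)))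
    -- the σ-parametrized logistic and Lotka–Volterra solutions
    (g : ℝ → ℝ → Ω → ℝ)
    (hg : ∀ (σ t : ℝ) (ω : Ω), g σ t ω =
      Real.exp (r * t + σ * B t ω) /
        (1 + r * ∫ s in (0:ℝ)..t, Real.exp (r * s + σ * B s ω)))
    (Φ : ℝ → ℝ → Ω → (Fin n → ℝ) → Fin n → ℝ)
    (hΦ : ∀ (σ t : ℝ) (ω : Ω) (y : Fin n → ℝ),
      Φ σ t ω y = g σ t ω • Ψ (∫ s in (0:ℝ)..t, g σ s ω) y)
    -- a compact set of initial conditions with uniformly bounded forward orbits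
    (K : Set (Fin n → ℝ)) (hK : IsCompact K) (hKnn : ∀ y ∈ K, ∀ i, 0 ≤ y i)
    (C₀ : ℝ)
    (hC₀ : ∀ y ∈ K, ∀ t : ℝ, 0 ≤ t → ‖Ψ t y‖ ≤ C₀ ∧
      ‖fun i => Ψ t y i * (r + ∑ j, a i j * Ψ t y j)‖ ≤ C₀)
    (T : ℝ) (hT : 0 < T) :
    (∃ C : ℝ, ∀ σ : ℝ, 0 < σ ^ 2 → σ ^ 2 ≤ r / 2 → ∀ y ∈ K,
      ∫ ω, ‖Φ σ T ω y - Ψ T y‖ ∂(ℙ : Measure Ω) ≤ C * |σ|) ∧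
    ∀ δ : ℝ, 0 < δ →
      Tendsto (fun σ : ℝ => ⨆ y ∈ K, (ℙ : Measure Ω) {ω | δ ≤ ‖Φ σ T ω y - Ψ T y‖})
        (𝓝[≠] 0) (𝓝 0) :=
  uniform_L1_convergence_small_noise_general n r hr a Ψ hΨ' B hBmeas hB0 hBcont hBgauss g hg Φ hΦ K
    hKnn C₀ hC₀ T hT
end

section
/- Support of a flow-invariant measure lies in the Birkhoff center (Proposition 5.4): Let X be a separable metric space and Ψ : ℝ → X → X a continuous flow, i.e. Ψ(0) = id, Ψ(t+s) = Ψ(t) ∘ Ψ(s) for all t,s ∈ ℝ, and (t,x) ↦ Ψ(t)x is continuous. Let μ be a Borel probability measure on X that is invariant under the flow: the pushforward of μ under Ψ(t) equals μ for every t ∈ ℝ. Then the topological support of μ is contained in the Birkhoff center B(Ψ) := closure{y ∈ X : y ∈ ω(y)}, where ω(y) := ⋂_{T ≥ 0} closure{Ψ(t)y : t ≥ T} is the omega-limit set of y. -/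
open Filter Topology MeasureTheory

/-!
The time-one map `Ψ 1` preserves `μ`, so by Poincaré recurrence almost every point returns to
each of its neighbourhoods at arbitrarily large integer times; such a point lies in its own
ω-limit set. Hence the closed set `closure {y | y ∈ ω(y)}` has full measure and therefore
contains the support of `μ`.
-/

section Flow

variable {X : Type*} {Ψ : ℝ → X → X}

theorem iterate_flow_one (h0 : Ψ 0 = id) (hflow : ∀ t s : ℝ, Ψ (t + s) = Ψ t ∘ Ψ s) (n : ℕ) :
    (Ψ 1)^[n] = Ψ n := by
  induction n with
  | zero => simp [h0]
  | succ n ih => rw [Function.iterate_succ', ih, ← hflow, Nat.cast_succ, add_comm]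

theorem mem_closure_image_Ici_of_frequently_mem [TopologicalSpace X] {x : X}
    (hx : ∀ U ∈ 𝓝 x, ∃ᶠ n : ℕ in atTop, Ψ n x ∈ U) (T : ℝ) :
    x ∈ closure ((fun t => Ψ t x) '' Set.Ici T) := by
  refine mem_closure_iff_nhds.2 fun U hU => ?_
  obtain ⟨n, hnU, hTn⟩ := ((hx U hU).and_eventually (eventually_ge_atTop ⌈T⌉₊)).exists
  exact ⟨Ψ n x, hnU, n, Nat.ceil_le.1 hTn, rfl⟩

theorem ae_mem_closure_image_Ici [TopologicalSpace X] [SecondCountableTopology X]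
    [MeasurableSpace X] [OpensMeasurableSpace X] {μ : Measure X} [IsFiniteMeasure μ]
    (h0 : Ψ 0 = id) (hflow : ∀ t s : ℝ, Ψ (t + s) = Ψ t ∘ Ψ s)
    (hΨ : MeasurePreserving (Ψ 1) μ μ) :
    ∀ᵐ x ∂μ, ∀ T : ℝ, x ∈ closure ((fun t => Ψ t x) '' Set.Ici T) := by
  filter_upwards [hΨ.conservative.ae_frequently_mem_of_mem_nhds] with x hx
  simp only [iterate_flow_one h0 hflow] at hx
  exact mem_closure_image_Ici_of_frequently_mem hx

end Flow

/-- **Support of a flow-invariant measure lies in the Birkhoff center**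
(Proposition 5.4). For a continuous flow `Ψ` on a separable metric space and a
flow-invariant Borel probability measure `μ`, the topological support of `μ`
(the points all of whose open neighborhoods have positive measure) is contained
in the Birkhoff center `closure {y : y ∈ ω(y)}`, where
`ω(y) = ⋂_{T ≥ 0} closure {Ψ(t) y : t ≥ T}`. -/
theorem support_invariant_measure_subset_birkhoff_center
    {X : Type*} [MetricSpace X] [TopologicalSpace.SeparableSpace X]
    [MeasurableSpace X] [BorelSpace X]
    (Ψ : ℝ → X → X)
    (h0 : Ψ 0 = id)
    (hflow : ∀ t s : ℝ, Ψ (t + s) = Ψ t ∘ Ψ s)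
    (hcont : Continuous fun p : ℝ × X => Ψ p.1 p.2)
    (μ : Measure X) [IsProbabilityMeasure μ]
    (hinv : ∀ t : ℝ, Measure.map (Ψ t) μ = μ) :
    {x : X | ∀ U : Set X, IsOpen U → x ∈ U → 0 < μ U} ⊆
      closure {y : X | ∀ T : ℝ, 0 ≤ T →
        y ∈ closure ((fun t => Ψ t y) '' Set.Ici T)} := by
  have : SecondCountableTopology X := UniformSpace.secondCountable_of_separable X
  have hΨ : MeasurePreserving (Ψ 1) μ μ :=
    ⟨(hcont.comp (Continuous.prodMk_right 1)).measurable, hinv 1⟩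
  have hsupport : {x : X | ∀ U : Set X, IsOpen U → x ∈ U → 0 < μ U} = μ.support := by
    simp only [Measure.support_eq_forall_isOpen, imp.swap]
  rw [hsupport]
  refine Measure.support_subset_of_isClosed isClosed_closure ?_
  filter_upwards [ae_mem_closure_image_Ici h0 hflow hΨ] with x hx
  exact subset_closure fun T _ => hx T
end

section
/- Weak limits of stationary measures as the noise vanishes are invariant for the deterministic flow (Proposition 5.3): Suppose that for every compact set K ⊆ ℝ₊ⁿ there is a constant C₀ with ‖Ψ(t,y)‖ ≤ C₀ for all y ∈ K and t ≥ 0 (dissipativity-type uniform boundedness of forward orbits). Let σᵢ ≠ 0 with σᵢ → 0, and for each i let νᵢ be a Borel probability measure on ℝ₊ⁿ that is stationary for the transition probability function P^{σᵢ} with noise intensity σᵢ. If the family {νᵢ} is tight and νᵢ converges weakly to a Borel probability measure μ, then μ is invariant for the deterministic flow: for every T ≥ 0, the pushforward of μ under the map y ↦ Ψ(T,y) equals μ. -/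
/-!
Write `g^σ(T)` for the logistic factor and `τ^σ(T) = ∫₀ᵀ g^σ = log(1 + r∫₀ᵀ e^{rs+σB_s} ds) / r`
for the random time change, so that `Φ^σ(T, ω, ·) = g^σ(T) • Ψ(τ^σ(T), ·)`. Along every
continuous Brownian path `g^σ(T) → 1` and `τ^σ(T) → T` as `σ → 0`, so the random maps
`Φ^{σᵢ}(T)` converge in probability to `Ψ(T)`, uniformly on compact sets by continuity of the
flow. Stationarity writes `∫ f dνᵢ` as `∫∫ f ∘ Φ^{σᵢ}(T) dℙ dνᵢ`; together with tightness this gives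
`∫ f ∘ Ψ(T) dνᵢ - ∫ f dνᵢ → 0` for bounded continuous `f`, and passing to the weak limit,
`∫ f ∘ Ψ(T) dμ = ∫ f dμ`. The portmanteau theorem puts `μ` on the orthant, off which `Ψ` is
extended continuously.
-/

open Real Filter Topology MeasureTheory ProbabilityTheory intervalIntegral
open scoped BoundedContinuousFunction

lemma tendsto_zero_of_forall_eventually_abs_le_mul {ι : Type*} {l : Filter ι} {u : ι → ℝ}
    (C : ℝ) (h : ∀ η > 0, ∀ᶠ i in l, |u i| ≤ C * η) : Tendsto u l (𝓝 0) := by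
  refine Metric.tendsto_nhds.2 fun ε hε => ?_
  filter_upwards [h (ε / (|C| + 1)) (by positivity)] with i hi
  rw [Real.dist_0_eq_abs]
  calc |u i| ≤ C * (ε / (|C| + 1)) := hi
    _ < (|C| + 1) * (ε / (|C| + 1)) := by gcongr; linarith [le_abs_self C]
    _ = ε := mul_div_cancel₀ _ (by positivity)

lemma IsCompact.eventually_forall_dist_lt {X Y Z : Type*} [TopologicalSpace X]
    [TopologicalSpace Y] [PseudoMetricSpace Z] {G : X → Y → Z}
    (hG : Continuous (Function.uncurry G)) {K : Set Y} (hK : IsCompact K) (x₀ : X) {ε : ℝ}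
    (hε : 0 < ε) : ∀ᶠ x in 𝓝 x₀, ∀ y ∈ K, dist (G x y) (G x₀ y) < ε := by
  refine hK.eventually_forall_of_forall_eventually fun y _ => ?_
  have hcont : Continuous fun z : X × Y => dist (G z.1 z.2) (G x₀ z.2) :=
    hG.dist (hG.comp (continuous_const.prodMk continuous_snd))
  exact (hcont.tendsto (x₀, y)).eventually_lt_const (by simpa using hε)

lemma abs_integral_le_add_mul_measureReal_compl {α : Type*} [MeasurableSpace α] {m : Measure α}
    [IsProbabilityMeasure m] {h : α → ℝ} {S : Set α} (hS : MeasurableSet S) {ε C : ℝ}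
    (hε : 0 ≤ ε) (hC : ∀ x, |h x| ≤ C) (hSε : ∀ x ∈ S, |h x| ≤ ε) :
    |∫ x, h x ∂m| ≤ ε + C * m.real Sᶜ := by
  have hbound (x : α) : ‖h x‖ ≤ ε + Sᶜ.indicator (fun _ => C) x := by
    by_cases hx : x ∈ S
    · simpa [hx] using hSε x hx
    · simpa [hx] using (hC x).trans (le_add_of_nonneg_left hε)
  have hint : Integrable (Sᶜ.indicator fun _ => C) m := (integrable_const C).indicator hS.compl
  calc |∫ x, h x ∂m| ≤ ∫ x, (ε + Sᶜ.indicator (fun _ => C) x) ∂m :=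
        norm_integral_le_of_norm_le ((integrable_const ε).add hint) (ae_of_all _ hbound)
    _ = ε + C * m.real Sᶜ := by
        rw [integral_add (integrable_const ε) hint, MeasureTheory.integral_const,
          integral_indicator_const _ hS.compl]
        simp [mul_comm]

lemma isTightMeasureSet_range_of_forall_ofReal {ι Y : Type*} [TopologicalSpace Y]
    [MeasurableSpace Y] {ν : ι → Measure Y}
    (h : ∀ ε : ℝ, 0 < ε → ∃ K : Set Y, IsCompact K ∧ ∀ i, ν i Kᶜ ≤ ENNReal.ofReal ε) :
    IsTightMeasureSet (Set.range ν) := by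
  refine isTightMeasureSet_iff_exists_isCompact_measure_compl_le.2 fun ε hε => ?_
  have hε₁ : min ε 1 ≠ ⊤ := (min_le_right ε 1).trans_lt ENNReal.one_lt_top |>.ne
  obtain ⟨K, hK, hνK⟩ := h (min ε 1).toReal (ENNReal.toReal_pos (by positivity) hε₁)
  refine ⟨K, hK, ?_⟩
  rintro _ ⟨i, rfl⟩
  exact (hνK i).trans ((ENNReal.ofReal_toReal hε₁).trans_le (min_le_left ε 1))

lemma measure_eq_one_of_tendsto_of_isClosed {ι Y : Type*} {l : Filter ι} [l.NeBot]
    [TopologicalSpace Y] [MeasurableSpace Y] [OpensMeasurableSpace Y] [HasOuterApproxClosed Y]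
    {ν : ι → ProbabilityMeasure Y} {μ : ProbabilityMeasure Y} (hν : Tendsto ν l (𝓝 μ))
    {S : Set Y} (hS : IsClosed S) (h : ∀ i, (ν i : Measure Y) S = 1) :
    (μ : Measure Y) S = 1 :=
  le_antisymm prob_le_one <| by
    simpa [h] using ProbabilityMeasure.limsup_measure_closed_le_of_tendsto hν hS

lemma map_prod_eq_of_lintegral_preimage_eq {Ω Y : Type*} [MeasurableSpace Ω] [MeasurableSpace Y]
    {P : Measure Ω} {ν : Measure Y} [SFinite ν] [SFinite P] {φ : Y × Ω → Y}
    (hφ : Measurable φ) {Φ : Ω → Y → Y} (hae : ∀ᵐ y ∂ν, ∀ᵐ ω ∂P, φ (y, ω) = Φ ω y)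
    (hstat : ∀ A, MeasurableSet A → ∫⁻ y, P {ω | Φ ω y ∈ A} ∂ν = ν A) :
    (ν.prod P).map φ = ν := by
  ext A hA
  rw [Measure.map_apply hφ hA, Measure.prod_apply (hφ hA), ← hstat A hA]
  refine lintegral_congr_ae (hae.mono fun y hy => measure_congr ?_)
  filter_upwards [hy] with ω hω
  change (φ (y, ω) ∈ A) = (Φ ω y ∈ A)
  rw [hω]

section RandomMaps

variable {Ω X Y : Type*} [MeasurableSpace Ω] {P : Measure Ω} [IsProbabilityMeasure P]
  [PseudoMetricSpace X] [SecondCountableTopology X] [MeasurableSpace X] [BorelSpace X]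
  [TopologicalSpace Y] [MeasurableSpace Y] [BorelSpace Y] {F : X → Y → Y} {x₀ : X}

lemma integral_comp_sub_integral_eq_integral_prod {ν : Measure Y} [IsProbabilityMeasure ν]
    {ξ : Ω → X} (hF : Continuous (Function.uncurry F)) (hξ : Measurable ξ)
    (hstat : (ν.prod P).map (fun p => F (ξ p.2) p.1) = ν) (f : Y →ᵇ ℝ) :
    ∫ y, f (F x₀ y) ∂ν - ∫ y, f y ∂ν = ∫ p, (f (F x₀ p.1) - f (F (ξ p.2) p.1)) ∂(ν.prod P) := by
  have hmeas : Measurable fun p : Y × Ω => F (ξ p.2) p.1 :=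
    hF.measurable.comp ((hξ.comp measurable_snd).prodMk measurable_fst)
  have hint : Integrable (fun p : Y × Ω => f (F (ξ p.2) p.1)) (ν.prod P) :=
    (by rw [hstat]; exact f.integrable ν : Integrable f _).comp_measurable hmeas
  have hint₀ : Integrable (fun y => f (F x₀ y)) ν :=
    (f.compContinuous ⟨F x₀, hF.uncurry_left x₀⟩).integrable ν
  have hfst := integral_fun_fst (μ := ν) (ν := P) fun y => f (F x₀ y)
  nth_rw 2 [← hstat]
  rw [integral_map hmeas.aemeasurable f.continuous.aestronglyMeasurable,
    integral_sub (hint₀.comp_fst P) hint, hfst]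
  simp

variable [T2Space Y] {ι : Type*} {l : Filter ι} {ξ : ι → Ω → X}

theorem tendsto_integral_comp_sub_integral {ν : ι → Measure Y} [∀ i, IsProbabilityMeasure (ν i)]
    (htight : IsTightMeasureSet (Set.range ν)) (hF : Continuous (Function.uncurry F))
    (hξ : ∀ i, Measurable (ξ i)) (hξlim : TendstoInMeasure P ξ l fun _ => x₀)
    (hstat : ∀ i, ((ν i).prod P).map (fun p => F (ξ i p.2) p.1) = ν i) (f : Y →ᵇ ℝ) :
    Tendsto (fun i => ∫ y, f (F x₀ y) ∂ν i - ∫ y, f y ∂ν i) l (𝓝 0) := by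
  refine tendsto_zero_of_forall_eventually_abs_le_mul (1 + 2 * (2 * ‖f‖)) fun η hη => ?_
  obtain ⟨K, hK, hνK⟩ := isTightMeasureSet_iff_exists_isCompact_measure_compl_le.1 htight
    (ENNReal.ofReal η) (ENNReal.ofReal_pos.2 hη)
  obtain ⟨δ, hδ, hclose⟩ := Metric.eventually_nhds_iff.1 <|
    hK.eventually_forall_dist_lt (G := fun x y => f (F x y)) (f.continuous.comp hF) x₀ hη
  filter_upwards [(tendstoInMeasure_iff_dist.1 hξlim δ hδ).eventually_lt_const
    (ENNReal.ofReal_pos.2 hη)] with i hi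
  set S := K ×ˢ (ξ i ⁻¹' Metric.ball x₀ δ)
  have hSc : ((ν i).prod P).real Sᶜ ≤ 2 * η := by
    refine ENNReal.toReal_le_of_le_ofReal (by positivity) ?_
    have hball : (ξ i ⁻¹' Metric.ball x₀ δ)ᶜ = {ω | δ ≤ dist (ξ i ω) x₀} := by
      ext ω; simp [Metric.mem_ball]
    calc ((ν i).prod P) Sᶜ ≤ ν i Kᶜ + P (ξ i ⁻¹' Metric.ball x₀ δ)ᶜ := by
          grw [Set.compl_prod_eq_union, measure_union_le, Measure.prod_prod, Measure.prod_prod]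
          simp
      _ ≤ ENNReal.ofReal η + ENNReal.ofReal η := by
          rw [hball]; exact add_le_add (hνK _ ⟨i, rfl⟩) hi.le
      _ = ENNReal.ofReal (2 * η) := by
          rw [← ENNReal.ofReal_add hη.le hη.le, two_mul]
  rw [integral_comp_sub_integral_eq_integral_prod hF (hξ i) (hstat i) f]
  calc |∫ p, (f (F x₀ p.1) - f (F (ξ i p.2) p.1)) ∂(ν i).prod P|
      ≤ η + 2 * ‖f‖ * ((ν i).prod P).real Sᶜ := by
        refine abs_integral_le_add_mul_measureReal_compl
          (hK.measurableSet.prod ((hξ i) measurableSet_ball)) hη.le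
          (fun p => f.dist_le_two_norm _ _) fun p hp => ?_
        rw [← Real.dist_eq, dist_comm]
        exact (hclose hp.2 p.1 hp.1).le
    _ ≤ η + 2 * ‖f‖ * (2 * η) := by gcongr
    _ = (1 + 2 * (2 * ‖f‖)) * η := by ring

theorem map_eq_of_tendsto_of_stationary [HasOuterApproxClosed Y] [l.NeBot]
    {ν : ι → ProbabilityMeasure Y} {μ : ProbabilityMeasure Y} (hν : Tendsto ν l (𝓝 μ))
    (htight : IsTightMeasureSet (Set.range fun i => (ν i : Measure Y)))
    (hF : Continuous (Function.uncurry F))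
    (hξ : ∀ i, Measurable (ξ i)) (hξlim : TendstoInMeasure P ξ l fun _ => x₀)
    (hstat : ∀ i, ((ν i : Measure Y).prod P).map (fun p => F (ξ i p.2) p.1) = ν i) :
    (μ : Measure Y).map (F x₀) = μ := by
  have hF₀ : Continuous (F x₀) := hF.uncurry_left x₀
  refine ext_of_forall_integral_eq_of_IsFiniteMeasure fun f => ?_
  rw [integral_map hF₀.aemeasurable f.continuous.aestronglyMeasurable]
  have hlim := ProbabilityMeasure.tendsto_iff_forall_integral_tendsto.1 hν
  have h := (hlim f).add (tendsto_integral_comp_sub_integral htight hF hξ hξlim hstat f)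
  simp only [add_sub_cancel, add_zero] at h
  exact tendsto_nhds_unique (hlim (f.compContinuous ⟨F x₀, hF₀⟩)) h

end RandomMaps

noncomputable def logisticDenom (r σ : ℝ) (b : ℝ → ℝ) (t : ℝ) : ℝ :=
  1 + r * ∫ s in (0:ℝ)..t, exp (r * s + σ * b s)

noncomputable def logisticSolution (r σ : ℝ) (b : ℝ → ℝ) (t : ℝ) : ℝ :=
  exp (r * t + σ * b t) / logisticDenom r σ b t

noncomputable def logisticTimeChange (r σ : ℝ) (b : ℝ → ℝ) (t : ℝ) : ℝ :=
  ∫ s in (0:ℝ)..t, logisticSolution r σ b s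

section LogisticSolution

variable {r σ t : ℝ} {b : ℝ → ℝ}

lemma one_le_logisticDenom (hr : 0 ≤ r) (ht : 0 ≤ t) : 1 ≤ logisticDenom r σ b t :=
  le_add_of_nonneg_right <| mul_nonneg hr <|
    intervalIntegral.integral_nonneg ht fun _ _ => (exp_pos _).le

lemma hasDerivAt_logisticDenom (hb : Continuous b) (t : ℝ) :
    HasDerivAt (logisticDenom r σ b) (r * exp (r * t + σ * b t)) t :=
  ((Continuous.integral_hasStrictDerivAt (by fun_prop) 0 t).hasDerivAt.const_mul r).const_add 1

lemma logisticDenom_zero_noise (hr : r ≠ 0) (t : ℝ) : logisticDenom r 0 b t = exp (r * t) := by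
  simp only [logisticDenom, zero_mul, add_zero]
  rw [intervalIntegral.integral_comp_mul_left exp hr, integral_exp, mul_zero, exp_zero,
    smul_eq_mul]
  field_simp
  ring

lemma logisticTimeChange_eq (hr : 0 < r) (hb : Continuous b) (ht : 0 ≤ t) :
    logisticTimeChange r σ b t = log (logisticDenom r σ b t) / r := by
  have hpos : ∀ s ∈ Set.uIcc 0 t, 0 < logisticDenom r σ b s := fun s hs =>
    one_pos.trans_le (one_le_logisticDenom hr.le (Set.uIcc_of_le ht ▸ hs).1)
  have hderiv : ∀ s ∈ Set.uIcc 0 t,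
      HasDerivAt (fun s => log (logisticDenom r σ b s) / r) (logisticSolution r σ b s) s :=
    fun s hs => by
      refine (((hasDerivAt_logisticDenom hb s).log (hpos s hs).ne').div_const r).congr_deriv ?_
      rw [logisticSolution]
      field_simp
  have hcont : ContinuousOn (logisticSolution r σ b) (Set.uIcc 0 t) :=
    ((by fun_prop : Continuous fun s => exp (r * s + σ * b s)).continuousOn).div
      (fun s _ => (hasDerivAt_logisticDenom hb s).continuousAt.continuousWithinAt)
      fun s hs => (hpos s hs).ne'
  rw [logisticTimeChange, integral_eq_sub_of_hasDerivAt hderiv hcont.intervalIntegrable]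
  simp [logisticDenom]

lemma continuous_logisticDenom_noise (hb : Continuous b) (t : ℝ) :
    Continuous fun σ => logisticDenom r σ b t :=
  continuous_const.add <| continuous_const.mul <|
    intervalIntegral.continuous_parametric_intervalIntegral_of_continuous' (by fun_prop) 0 t

lemma tendsto_logisticSolution_noise_zero (hr : r ≠ 0) (hb : Continuous b) (t : ℝ) :
    Tendsto (fun σ => logisticSolution r σ b t) (𝓝 0) (𝓝 1) := by
  have hD := (continuous_logisticDenom_noise (r := r) hb t).tendsto 0
  rw [logisticDenom_zero_noise hr] at hD
  have hN : Tendsto (fun σ => exp (r * t + σ * b t)) (𝓝 0) (𝓝 (exp (r * t))) := by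
    simpa using (by fun_prop : Continuous fun σ : ℝ => exp (r * t + σ * b t)).tendsto 0
  have := hN.div hD (exp_pos _).ne'
  rwa [div_self (exp_pos _).ne'] at this

lemma tendsto_logisticTimeChange_noise_zero (hr : 0 < r) (hb : Continuous b) (ht : 0 ≤ t) :
    Tendsto (fun σ => logisticTimeChange r σ b t) (𝓝 0) (𝓝 t) := by
  have hD := (continuous_logisticDenom_noise (r := r) hb t).tendsto 0
  rw [logisticDenom_zero_noise hr.ne'] at hD
  have := (hD.log (exp_pos _).ne').div_const r
  rw [log_exp, mul_div_cancel_left₀ _ hr.ne'] at this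
  simpa only [logisticTimeChange_eq hr hb ht] using this

lemma logisticTimeChange_nonneg (hr : 0 < r) (hb : Continuous b) (ht : 0 ≤ t) :
    0 ≤ logisticTimeChange r σ b t := by
  rw [logisticTimeChange_eq hr hb ht]
  exact div_nonneg (log_nonneg (one_le_logisticDenom hr.le ht)) hr.le

end LogisticSolution

theorem aemeasurable_intervalIntegral_of_ae_continuous {Ω : Type*} [MeasurableSpace Ω]
    {P : Measure Ω} {X : ℝ → Ω → ℝ} (hX : ∀ t, Measurable (X t))
    (hcont : ∀ᵐ ω ∂P, Continuous fun t => X t ω) (a b : ℝ) :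
    AEMeasurable (fun ω => ∫ s in a..b, X s ω) P := by
  -- Vanishing off a measurable full-measure set of continuous paths makes `X` jointly measurable.
  obtain ⟨S, hSae, hSmeas, hScont⟩ := hcont.exists_measurable_mem
  set Y : ℝ → Ω → ℝ := fun t => S.indicator (X t)
  have hYcont (ω : Ω) : Continuous fun t => Y t ω := by
    by_cases hω : ω ∈ S
    · simpa [Y, hω] using hScont ω hω
    · simpa [Y, hω] using continuous_const
  have hY : StronglyMeasurable (Function.uncurry Y) :=
    (measurable_uncurry_of_continuous_of_measurable hYcont fun t =>
      (hX t).indicator hSmeas).stronglyMeasurable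
  refine ⟨fun ω => ∫ s in a..b, Y s ω, ?_, ?_⟩
  · exact ((hY.integral_prod_left (μ := volume.restrict (Set.Ioc a b))).sub
      (hY.integral_prod_left (μ := volume.restrict (Set.Ioc b a)))).measurable
  · filter_upwards [hSae] with ω hω
    simp [Y, hω]

section BrownianLogistic

variable {Ω : Type*} [MeasurableSpace Ω] {P : Measure Ω} {B : ℝ → Ω → ℝ} {r : ℝ}

lemma aemeasurable_logisticDenom (hB : ∀ t, Measurable (B t))
    (hBc : ∀ᵐ ω ∂P, Continuous fun t => B t ω) (σ t : ℝ) :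
    AEMeasurable (fun ω => logisticDenom r σ (fun s => B s ω) t) P :=
  aemeasurable_const.add <| (aemeasurable_intervalIntegral_of_ae_continuous
    (X := fun s ω => exp (r * s + σ * B s ω))
    (fun s => (((hB s).const_mul σ).const_add (r * s)).exp)
    (by filter_upwards [hBc] with ω hω; fun_prop) 0 t).const_mul r

lemma aemeasurable_logisticSolution (hB : ∀ t, Measurable (B t))
    (hBc : ∀ᵐ ω ∂P, Continuous fun t => B t ω) (σ t : ℝ) :
    AEMeasurable (fun ω => logisticSolution r σ (fun s => B s ω) t) P :=
  (((hB t).const_mul σ).const_add (r * t)).exp.aemeasurable.div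
    (aemeasurable_logisticDenom hB hBc σ t)

lemma aemeasurable_logisticTimeChange (hr : 0 < r) (hB : ∀ t, Measurable (B t))
    (hBc : ∀ᵐ ω ∂P, Continuous fun t => B t ω) (σ : ℝ) {t : ℝ} (ht : 0 ≤ t) :
    AEMeasurable (fun ω => logisticTimeChange r σ (fun s => B s ω) t) P :=
  ((aemeasurable_logisticDenom hB hBc σ t).log.div_const r).congr <| by
    filter_upwards [hBc] with ω hω
    exact (logisticTimeChange_eq hr hω ht).symm

lemma exists_measurable_tendstoInMeasure_logistic [IsFiniteMeasure P] (hr : 0 < r) {T : ℝ}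
    (hT : 0 ≤ T) (hB : ∀ t, Measurable (B t)) (hBc : ∀ᵐ ω ∂P, Continuous fun t => B t ω)
    {σ : ℕ → ℝ} (hσ : Tendsto σ atTop (𝓝 0)) :
    ∃ ξ : ℕ → Ω → ℝ × ℝ, (∀ i, Measurable (ξ i)) ∧
      (∀ i, ∀ᵐ ω ∂P, ξ i ω = (logisticSolution r (σ i) (fun s => B s ω) T,
        logisticTimeChange r (σ i) (fun s => B s ω) T)) ∧
      TendstoInMeasure P ξ atTop fun _ => (1, T) := by
  have hmeas (i : ℕ) := (aemeasurable_logisticSolution (P := P) (r := r) hB hBc (σ i) T).prodMk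
    (aemeasurable_logisticTimeChange hr hB hBc (σ i) hT)
  refine ⟨fun i => (hmeas i).mk _, fun i => (hmeas i).measurable_mk,
    fun i => (hmeas i).ae_eq_mk.symm, tendstoInMeasure_of_tendsto_ae
      (fun i => (hmeas i).measurable_mk.aestronglyMeasurable) ?_⟩
  filter_upwards [hBc, ae_all_iff.2 fun i => (hmeas i).ae_eq_mk] with ω hω hmk
  simp_rw [← hmk]
  exact ((tendsto_logisticSolution_noise_zero hr.ne' hω T).comp hσ).prodMk_nhds
    ((tendsto_logisticTimeChange_noise_zero hr hω hT).comp hσ)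

end BrownianLogistic

/-- `Φ^σ(t, ω, ·) = scaledFlow Ψ (g^σ(t, ω), τ^σ(t, ω))` on the orthant; clamping both arguments
extends `Ψ` continuously to all of `ℝ × ℝⁿ`. -/
noncomputable def scaledFlow {ι : Type*} (Ψ : ℝ → (ι → ℝ) → ι → ℝ) (x : ℝ × ℝ) (y : ι → ℝ) :
    ι → ℝ :=
  x.1 • Ψ (max x.2 0) (y ⊔ 0)

section ScaledFlow

variable {ι : Type*} {Ψ : ℝ → (ι → ℝ) → ι → ℝ}

lemma continuous_scaledFlow
    (hΨ : ContinuousOn (fun p : ℝ × (ι → ℝ) => Ψ p.1 p.2) (Set.Ici 0 ×ˢ Set.Ici 0)) :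
    Continuous (Function.uncurry (scaledFlow Ψ)) := by
  refine continuous_fst.fst.smul <| hΨ.comp_continuous
    ((continuous_fst.snd.max continuous_const).prodMk <|
      continuous_pi fun i => ((continuous_apply i).comp continuous_snd).max continuous_const)
    fun p => ⟨Set.mem_Ici.2 (le_max_right p.1.2 0), Set.mem_Ici.2 le_sup_right⟩

lemma scaledFlow_of_nonneg {x : ℝ × ℝ} {y : ι → ℝ} (hx : 0 ≤ x.2) (hy : 0 ≤ y) :
    scaledFlow Ψ x y = x.1 • Ψ x.2 y := by
  rw [scaledFlow, max_eq_left hx, sup_eq_left.2 hy]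

end ScaledFlow

theorem weak_limit_of_stationary_measures_is_flow_invariant_general
    {Ω : Type*} [MeasureSpace Ω] [IsProbabilityMeasure (ℙ : Measure Ω)]
    (n : ℕ) (r : ℝ) (hr : 0 < r)
    (Ψ : ℝ → (Fin n → ℝ) → Fin n → ℝ)
    (hΨcont : ContinuousOn (fun p : ℝ × (Fin n → ℝ) => Ψ p.1 p.2)
      (Set.Ici 0 ×ˢ {y | ∀ i, 0 ≤ y i}))
    (B : ℝ → Ω → ℝ)
    (hBmeas : ∀ t, Measurable (B t))
    (hBcont : ∀ᵐ ω ∂(ℙ : Measure Ω), Continuous fun t => B t ω)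
    -- the σ-parametrized logistic and Lotka–Volterra solutions
    (g : ℝ → ℝ → Ω → ℝ)
    (hg : ∀ (σ t : ℝ) (ω : Ω), g σ t ω =
      Real.exp (r * t + σ * B t ω) /
        (1 + r * ∫ s in (0:ℝ)..t, Real.exp (r * s + σ * B s ω)))
    (Φ : ℝ → ℝ → Ω → (Fin n → ℝ) → Fin n → ℝ)
    (hΦ : ∀ (σ t : ℝ) (ω : Ω) (y : Fin n → ℝ),
      Φ σ t ω y = g σ t ω • Ψ (∫ s in (0:ℝ)..t, g σ s ω) y)
    -- vanishing noise intensities and associated stationary measures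
    (σseq : ℕ → ℝ) (hσ0 : Tendsto σseq atTop (𝓝 0))
    (ν : ℕ → Measure (Fin n → ℝ)) (hνprob : ∀ i, IsProbabilityMeasure (ν i))
    (hνorth : ∀ i, ν i {y : Fin n → ℝ | ∀ j, 0 ≤ y j} = 1)
    (hνstat : ∀ i, ∀ t : ℝ, 0 ≤ t → ∀ A : Set (Fin n → ℝ), MeasurableSet A →
      ∫⁻ y, (ℙ : Measure Ω) {ω | Φ (σseq i) t ω y ∈ A} ∂(ν i) = ν i A)
    -- tightness and weak convergence to μ
    (htight : ∀ ε : ℝ, 0 < ε → ∃ K : Set (Fin n → ℝ), IsCompact K ∧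
      ∀ i, ν i Kᶜ ≤ ENNReal.ofReal ε)
    (μ : Measure (Fin n → ℝ)) (hμprob : IsProbabilityMeasure μ)
    (hweak : ∀ f : (Fin n → ℝ) → ℝ, Continuous f → (∃ M : ℝ, ∀ x, |f x| ≤ M) →
      Tendsto (fun i => ∫ x, f x ∂(ν i)) atTop (𝓝 (∫ x, f x ∂μ))) :
    ∀ T : ℝ, 0 ≤ T → ∀ A : Set (Fin n → ℝ), MeasurableSet A →
      μ ((fun y => Ψ T y) ⁻¹' A) = μ A := by
  intro T hT A hA
  have horth : {y : Fin n → ℝ | ∀ i, 0 ≤ y i} = Set.Ici 0 := Set.ext fun y => Pi.le_def.symm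
  rw [horth] at hΨcont hνorth
  obtain rfl : g = fun σ t ω => logisticSolution r σ (fun s => B s ω) t := by
    funext σ t ω; exact hg σ t ω
  obtain rfl : Φ = fun σ t ω y => logisticSolution r σ (fun s => B s ω) t •
      Ψ (logisticTimeChange r σ (fun s => B s ω) t) y := by
    funext σ t ω y; exact hΦ σ t ω y
  obtain ⟨ξ, hξ, hξae, hξlim⟩ :=
    exists_measurable_tendstoInMeasure_logistic hr hT hBmeas hBcont hσ0
  have hF := continuous_scaledFlow hΨcont
  have hstat (i : ℕ) : ((ν i).prod ℙ).map (fun p => scaledFlow Ψ (ξ i p.2) p.1) = ν i := by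
    refine map_prod_eq_of_lintegral_preimage_eq (hF.measurable.comp
      (((hξ i).comp measurable_snd).prodMk measurable_fst)) ?_ (hνstat i T hT)
    filter_upwards [(mem_ae_iff_prob_eq_one measurableSet_Ici).2 (hνorth i)] with y hy
    filter_upwards [hξae i, hBcont] with ω hω hωc
    rw [hω, scaledFlow_of_nonneg (logisticTimeChange_nonneg hr hωc hT) hy]
  let νP (i : ℕ) : ProbabilityMeasure (Fin n → ℝ) := ⟨ν i, hνprob i⟩
  let μP : ProbabilityMeasure (Fin n → ℝ) := ⟨μ, hμprob⟩
  have hlim : Tendsto νP atTop (𝓝 μP) :=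
    ProbabilityMeasure.tendsto_iff_forall_integral_tendsto.2 fun f =>
      hweak f f.continuous ⟨‖f‖, f.norm_coe_le_norm⟩
  have hinv : μ.map (scaledFlow Ψ (1, T)) = μ := map_eq_of_tendsto_of_stationary hlim
    (isTightMeasureSet_range_of_forall_ofReal htight) hF hξ hξlim hstat
  have hμorth : ∀ᵐ y ∂μ, 0 ≤ y := (mem_ae_iff_prob_eq_one measurableSet_Ici).2
    (measure_eq_one_of_tendsto_of_isClosed hlim isClosed_Ici hνorth)
  calc μ ((fun y => Ψ T y) ⁻¹' A) = μ (scaledFlow Ψ (1, T) ⁻¹' A) := by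
        refine measure_congr (hμorth.mono fun y hy => ?_)
        change (Ψ T y ∈ A) = (scaledFlow Ψ (1, T) y ∈ A)
        rw [scaledFlow_of_nonneg hT hy, one_smul]
    _ = μ A := by rw [← Measure.map_apply (hF.uncurry_left _).measurable hA, hinv]

/-- **Weak limits of stationary measures as the noise vanishes are invariant for the
deterministic flow** (Proposition 5.3). Assume forward orbits of the deterministic
Lotka–Volterra semiflow `Ψ` are uniformly bounded on compact sets of the nonnegative
orthant. If `νᵢ` are stationary measures for the stochastic systems with noise
intensities `σᵢ ≠ 0`, `σᵢ → 0`, the family `{νᵢ}` is tight, and `νᵢ → μ` weakly,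
then `μ` is invariant for the deterministic semiflow: the pushforward of `μ` under
`y ↦ Ψ(T,y)` equals `μ` for every `T ≥ 0`. -/
theorem weak_limit_of_stationary_measures_is_flow_invariant
    {Ω : Type*} [MeasureSpace Ω] [IsProbabilityMeasure (ℙ : Measure Ω)]
    (n : ℕ) (r : ℝ) (hr : 0 < r)
    (a : Fin n → Fin n → ℝ)
    (Ψ : ℝ → (Fin n → ℝ) → Fin n → ℝ)
    (hΨcont : ContinuousOn (fun p : ℝ × (Fin n → ℝ) => Ψ p.1 p.2)
      (Set.Ici 0 ×ˢ {y | ∀ i, 0 ≤ y i}))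
    (hΨ0 : ∀ y : Fin n → ℝ, (∀ i, 0 ≤ y i) → Ψ 0 y = y)
    (hΨnn : ∀ t : ℝ, 0 ≤ t → ∀ y : Fin n → ℝ, (∀ i, 0 ≤ y i) → ∀ i, 0 ≤ Ψ t y i)
    (hΨ' : ∀ y : Fin n → ℝ, (∀ i, 0 ≤ y i) → ∀ t : ℝ, 0 ≤ t → ∀ i,
      HasDerivAt (fun t => Ψ t y i) (Ψ t y i * (r + ∑ j, a i j * Ψ t y j)) t)
    -- dissipativity-type uniform boundedness of forward orbits on compact sets
    (hbdd : ∀ K : Set (Fin n → ℝ), IsCompact K → K ⊆ {y | ∀ i, 0 ≤ y i} →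
      ∃ C₀ : ℝ, ∀ y ∈ K, ∀ t : ℝ, 0 ≤ t → ‖Ψ t y‖ ≤ C₀)
    (B : ℝ → Ω → ℝ)
    (hBmeas : ∀ t, Measurable (B t))
    (hB0 : ∀ᵐ ω ∂(ℙ : Measure Ω), B 0 ω = 0)
    (hBcont : ∀ᵐ ω ∂(ℙ : Measure Ω), Continuous fun t => B t ω)
    (hBindep : ∀ (m : ℕ) (t : Fin (m + 1) → ℝ), (∀ i, 0 ≤ t i) → Monotone t →
      iIndepFun
        (fun (i : Fin m) ω => B (t i.succ) ω - B (t i.castSucc) ω) ℙ)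
    (hBgauss : ∀ s t : ℝ, 0 ≤ s → s ≤ t →
      Measure.map (fun ω => B t ω - B s ω) ℙ = gaussianReal 0 (Real.toNNReal (t - s)))
    -- the σ-parametrized logistic and Lotka–Volterra solutions
    (g : ℝ → ℝ → Ω → ℝ)
    (hg : ∀ (σ t : ℝ) (ω : Ω), g σ t ω =
      Real.exp (r * t + σ * B t ω) /
        (1 + r * ∫ s in (0:ℝ)..t, Real.exp (r * s + σ * B s ω)))
    (Φ : ℝ → ℝ → Ω → (Fin n → ℝ) → Fin n → ℝ)
    (hΦ : ∀ (σ t : ℝ) (ω : Ω) (y : Fin n → ℝ),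
      Φ σ t ω y = g σ t ω • Ψ (∫ s in (0:ℝ)..t, g σ s ω) y)
    -- vanishing noise intensities and associated stationary measures
    (σseq : ℕ → ℝ) (hσne : ∀ i, σseq i ≠ 0) (hσ0 : Tendsto σseq atTop (𝓝 0))
    (ν : ℕ → Measure (Fin n → ℝ)) (hνprob : ∀ i, IsProbabilityMeasure (ν i))
    (hνorth : ∀ i, ν i {y : Fin n → ℝ | ∀ j, 0 ≤ y j} = 1)
    (hνstat : ∀ i, ∀ t : ℝ, 0 ≤ t → ∀ A : Set (Fin n → ℝ), MeasurableSet A →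
      ∫⁻ y, (ℙ : Measure Ω) {ω | Φ (σseq i) t ω y ∈ A} ∂(ν i) = ν i A)
    -- tightness and weak convergence to μ
    (htight : ∀ ε : ℝ, 0 < ε → ∃ K : Set (Fin n → ℝ), IsCompact K ∧
      ∀ i, ν i Kᶜ ≤ ENNReal.ofReal ε)
    (μ : Measure (Fin n → ℝ)) (hμprob : IsProbabilityMeasure μ)
    (hweak : ∀ f : (Fin n → ℝ) → ℝ, Continuous f → (∃ M : ℝ, ∀ x, |f x| ≤ M) →
      Tendsto (fun i => ∫ x, f x ∂(ν i)) atTop (𝓝 (∫ x, f x ∂μ))) :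
    ∀ T : ℝ, 0 ≤ T → ∀ A : Set (Fin n → ℝ), MeasurableSet A →
      μ ((fun y => Ψ T y) ⁻¹' A) = μ A :=
  weak_limit_of_stationary_measures_is_flow_invariant_general n r hr Ψ hΨcont B hBmeas hBcont g hg Φ
    hΦ σseq hσ0 ν hνprob hνorth hνstat htight μ hμprob hweak
end
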